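/- arXiv:1506.01422 — 7 statements merged into one kernel-verified Lean document; each statement's English description precedes it below -/
import Mathlib

section
/- Let w be an element of the free group F₂ on two generators x, y. If w is not a law (identity) of the infinite dihedral group D∞, i.e. there exist elements a, b of D∞ with w(a,b) ≠ 1, then the word map induced by w on PSL(2,ℂ) is surjective: for every c ∈ PSL(2,ℂ) there exist g, h ∈ PSL(2,ℂ) with w(g,h) = c. -/
/-- The word map on a group `G` induced by a word `w` in the free group on two
generators: substitute `g` for the first generator and `h` for the second. -/
def wordMap {G : Type*} [Group G] (w : FreeGroup (Fin 2)) (g h : G) : G :=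
  FreeGroup.lift ![g, h] w

/-- The special linear group `SL(2,ℂ)`. -/
abbrev SL2C := Matrix.SpecialLinearGroup (Fin 2) ℂ

/-- The projective special linear group `PSL(2,ℂ) = SL(2,ℂ)/center`. -/
abbrev PSL2C := SL2C ⧸ Subgroup.center SL2C

namespace WMaux

open Matrix Multiplicative

lemma wordMap_map {G H : Type*} [Group G] [Group H] (f : G →* H)
    (w : FreeGroup (Fin 2)) (g h : G) :
    f (wordMap w g h) = wordMap w (f g) (f h) := by
  have : f.comp (FreeGroup.lift ![g, h]) = FreeGroup.lift ![f g, f h] := by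
    apply FreeGroup.ext_hom
    intro a
    fin_cases a <;> simp
  exact DFunLike.congr_fun this w

lemma wordMap_conj {G : Type*} [Group G] (w : FreeGroup (Fin 2)) (u g h : G) :
    wordMap w (u * g * u⁻¹) (u * h * u⁻¹) = u * wordMap w g h * u⁻¹ := by
  have := wordMap_map (MulAut.conj u).toMonoidHom w g h
  simpa using this.symm

/-- exponent sum of the first generator -/
def ex : FreeGroup (Fin 2) →* Multiplicative ℤ := FreeGroup.lift ![ofAdd 1, 1]
/-- exponent sum of the second generator -/
def ey : FreeGroup (Fin 2) →* Multiplicative ℤ := FreeGroup.lift ![1, ofAdd 1]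

lemma wordMap_one_right {G : Type*} [Group G] (w : FreeGroup (Fin 2)) (g : G) :
    wordMap w g 1 = g ^ (ex w).toAdd := by
  have : (FreeGroup.lift ![g, (1:G)]) = (zpowersHom G g).comp ex := by
    apply FreeGroup.ext_hom
    intro a
    fin_cases a <;> simp [ex, zpowersHom_apply]
  show (FreeGroup.lift ![g, (1:G)]) w = _
  rw [this]; rfl

lemma wordMap_one_left {G : Type*} [Group G] (w : FreeGroup (Fin 2)) (h : G) :
    wordMap w 1 h = h ^ (ey w).toAdd := by
  have : (FreeGroup.lift ![(1:G), h]) = (zpowersHom G h).comp ey := by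
    apply FreeGroup.ext_hom
    intro a
    fin_cases a <;> simp [ey, zpowersHom_apply]
  show (FreeGroup.lift ![(1:G), h]) w = _
  rw [this]; rfl

lemma wordMap_comm {G : Type*} [CommGroup G] (w : FreeGroup (Fin 2)) (g h : G) :
    wordMap w g h = g ^ (ex w).toAdd * h ^ (ey w).toAdd := by
  have : (FreeGroup.lift ![g, h]) = ((zpowersHom G g).comp ex) * ((zpowersHom G h).comp ey) := by
    apply FreeGroup.ext_hom
    intro a
    fin_cases a <;> simp [ex, ey, zpowersHom_apply]
  show (FreeGroup.lift ![g, h]) w = _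
  rw [this]; rfl

end WMaux


namespace WMaux

/-- the identity map `ZMod 0 → ℤ` -/
def zc (i : ZMod 0) : ℤ := i

lemma zc_add (i j : ZMod 0) : zc (i + j) = zc i + zc j := rfl
lemma zc_sub (i j : ZMod 0) : zc (i - j) = zc i - zc j := rfl
lemma zc_zero : zc 0 = 0 := rfl

/-- A homomorphism from the infinite dihedral group given by `P, Q` with
`Q P = P⁻¹ Q` and `Q² = 1`. -/
def dihedralHom {G : Type*} [Group G] (P Q : G)
    (h1 : Q * P = P⁻¹ * Q) (h2 : Q * Q = 1) :
    DihedralGroup 0 →* G where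
  toFun := fun x => match x with
    | .r i => P ^ zc i
    | .sr i => Q * P ^ zc i
  map_one' := by
    show P ^ zc (0 : ZMod 0) = 1
    rw [zc_zero, zpow_zero]
  map_mul' := by
    have hconj : Q * P * Q⁻¹ = P⁻¹ := by rw [h1]; group
    have key : ∀ k : ℤ, Q * P ^ k = P ^ (-k) * Q := by
      intro k
      have : Q * P ^ k * Q⁻¹ = P ^ (-k) := by
        rw [← conj_zpow, hconj, inv_zpow, zpow_neg]
      calc Q * P ^ k = Q * P ^ k * Q⁻¹ * Q := by group
        _ = P ^ (-k) * Q := by rw [this]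
    have key' : ∀ k : ℤ, P ^ k * Q = Q * P ^ (-k) := by
      intro k; rw [key, neg_neg]
    rintro (i | i) (j | j)
    · show P ^ zc (i + j) = P ^ zc i * P ^ zc j
      rw [zc_add, zpow_add]
    · show Q * P ^ zc (j - i) = P ^ zc i * (Q * P ^ zc j)
      rw [← mul_assoc, key', mul_assoc, ← zpow_add, zc_sub]
      ring_nf
    · show Q * P ^ zc (i + j) = Q * P ^ zc i * P ^ zc j
      rw [mul_assoc, ← zpow_add, zc_add]
    · show P ^ zc (j - i) = Q * P ^ zc i * (Q * P ^ zc j)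
      rw [mul_assoc, ← mul_assoc (P ^ zc i), key', mul_assoc, ← mul_assoc Q Q,
        h2, one_mul, ← zpow_add, zc_sub]
      ring_nf

@[simp] lemma dihedralHom_r {G : Type*} [Group G] (P Q : G) (h1 : Q * P = P⁻¹ * Q)
    (h2 : Q * Q = 1) (i : ZMod 0) :
    dihedralHom P Q h1 h2 (DihedralGroup.r i) = P ^ zc i := rfl

@[simp] lemma dihedralHom_sr {G : Type*} [Group G] (P Q : G) (h1 : Q * P = P⁻¹ * Q)
    (h2 : Q * Q = 1) (i : ZMod 0) :
    dihedralHom P Q h1 h2 (DihedralGroup.sr i) = Q * P ^ zc i := rfl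

end WMaux


namespace WMaux

open Matrix Multiplicative Complex

noncomputable section

/-- the diagonal matrix `diag(t, t⁻¹)` as a homomorphism `ℂˣ →* SL(2,ℂ)` -/
def Dh : ℂˣ →* SL2C where
  toFun t := ⟨!![(t : ℂ), 0; 0, ((t⁻¹ : ℂˣ) : ℂ)], by
    simp [Matrix.det_fin_two_of]⟩
  map_one' := by
    apply Subtype.ext
    simp [Matrix.one_fin_two]
  map_mul' s t := by
    apply Subtype.ext
    show _ = (_ : Matrix (Fin 2) (Fin 2) ℂ) * _
    simp [Matrix.mul_fin_two, mul_comm]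

/-- the unipotent matrix `[[1,u],[0,1]]` as a homomorphism from `Multiplicative ℂ` -/
def Uh : Multiplicative ℂ →* SL2C where
  toFun u := ⟨!![1, u.toAdd; 0, 1], by simp [Matrix.det_fin_two_of]⟩
  map_one' := by
    apply Subtype.ext
    simp [Matrix.one_fin_two]
  map_mul' s t := by
    apply Subtype.ext
    show _ = (_ : Matrix (Fin 2) (Fin 2) ℂ) * _
    simp [Matrix.mul_fin_two, add_comm]

def um (u : ℂ) : SL2C := Uh (ofAdd u)

lemma um_coe (u : ℂ) : (um u : Matrix (Fin 2) (Fin 2) ℂ) = !![1, u; 0, 1] := rfl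

lemma um_zpow (u : ℂ) (k : ℤ) : (um u) ^ k = um (k * u) := by
  rw [um, ← map_zpow]
  congr 1
  rw [← ofAdd_zsmul]
  norm_num

def Sm : SL2C := ⟨!![0, 1; -1, 0], by simp [Matrix.det_fin_two_of]⟩

def Jm : SL2C := ⟨!![I, 0; 0, -I], by simp [Matrix.det_fin_two_of]⟩

end

end WMaux
namespace WMaux
noncomputable section
open Matrix Multiplicative Complex

instance : Fact (Even (Fintype.card (Fin 2))) := ⟨by simp⟩

def Dm (t : ℂˣ) : SL2C := Dh t

lemma Dm_coe (t : ℂˣ) : (Dm t : Matrix (Fin 2) (Fin 2) ℂ) = !![(t:ℂ), 0; 0, ((t⁻¹:ℂˣ):ℂ)] := rfl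

lemma Dm_zpow (t : ℂˣ) (k : ℤ) : (Dm t) ^ k = Dm (t ^ k) := (map_zpow Dh t k).symm

lemma Dm_inv (t : ℂˣ) : (Dm t)⁻¹ = Dm t⁻¹ := (map_inv Dh t).symm

lemma neg_one_coe : ((-1 : SL2C) : Matrix (Fin 2) (Fin 2) ℂ) = !![-1, 0; 0, -1] := by
  rw [Matrix.SpecialLinearGroup.coe_neg, Matrix.SpecialLinearGroup.coe_one, Matrix.one_fin_two]
  norm_num

lemma neg_one_mem_center : (-1 : SL2C) ∈ Subgroup.center SL2C := by
  rw [Subgroup.mem_center_iff]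
  intro g
  apply Subtype.ext
  show (g : Matrix (Fin 2) (Fin 2) ℂ) * _ = (_ : Matrix (Fin 2) (Fin 2) ℂ) * _
  rw [Matrix.SpecialLinearGroup.coe_neg, Matrix.SpecialLinearGroup.coe_one]
  simp

/-- the projection onto `PSL(2,ℂ)` -/
def pr : SL2C →* PSL2C := QuotientGroup.mk' (Subgroup.center SL2C)

lemma pr_neg_one : pr (-1 : SL2C) = 1 := by
  rw [pr, QuotientGroup.mk'_apply, QuotientGroup.eq_one_iff]
  exact neg_one_mem_center

lemma pr_surj : Function.Surjective pr := QuotientGroup.mk'_surjective _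

lemma Sm_mul_Dm (t : ℂˣ) : Sm * Dm t = (Dm t)⁻¹ * Sm := by
  rw [Dm_inv]
  apply Subtype.ext
  show (_ : Matrix (Fin 2) (Fin 2) ℂ) * _ = (_ : Matrix (Fin 2) (Fin 2) ℂ) * _
  rw [Sm, Dm_coe, Dm_coe]
  simp [Matrix.mul_fin_two]

lemma Sm_mul_Sm : Sm * Sm = -1 := by
  apply Subtype.ext
  show (_ : Matrix (Fin 2) (Fin 2) ℂ) * _ = _
  rw [Sm, neg_one_coe]
  simp [Matrix.mul_fin_two]

lemma um_inv (u : ℂ) : (um u)⁻¹ = um (-u) := by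
  rw [um, um, ← map_inv, ofAdd_neg]

lemma Jm_mul_um : Jm * um 1 = (um 1)⁻¹ * Jm := by
  rw [um_inv]
  apply Subtype.ext
  show (_ : Matrix (Fin 2) (Fin 2) ℂ) * _ = (_ : Matrix (Fin 2) (Fin 2) ℂ) * _
  rw [Jm, um_coe, um_coe]
  simp [Matrix.mul_fin_two]

lemma Jm_mul_Jm : Jm * Jm = -1 := by
  apply Subtype.ext
  show (_ : Matrix (Fin 2) (Fin 2) ℂ) * _ = _
  rw [Jm, neg_one_coe]
  simp [Matrix.mul_fin_two, Complex.I_mul_I]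

lemma Dm_mul_um_mul_Dm_inv (s : ℂˣ) (u : ℂ) : Dm s * um u * (Dm s)⁻¹ = um ((s:ℂ)^2 * u) := by
  rw [Dm_inv]
  apply Subtype.ext
  show (_ : Matrix (Fin 2) (Fin 2) ℂ) * _ * _ = _
  rw [Dm_coe, Dm_coe, um_coe, um_coe]
  rw [Matrix.mul_fin_two, Matrix.mul_fin_two]
  norm_num
  ring_nf

end
end WMaux
namespace WMaux
noncomputable section
open Matrix Multiplicative Complex

lemma exists_sqrt (x : ℂ) : ∃ z : ℂ, z ^ 2 = x :=
  IsAlgClosed.exists_pow_nat_eq x (n := 2) (by norm_num)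

lemma fin2_ext {a b c d e f g h : ℂ} (h1 : a = e) (h2 : b = f) (h3 : c = g) (h4 : d = h) :
    !![a, b; c, d] = !![e, f; g, h] := by rw [h1, h2, h3, h4]

lemma neg_um_coe (u : ℂ) : ((-(um u) : SL2C) : Matrix (Fin 2) (Fin 2) ℂ) = !![-1, -u; 0, -1] := by
  rw [Matrix.SpecialLinearGroup.coe_neg, um_coe]
  norm_num

/-- Classification of elements of SL(2,C) up to conjugacy. -/
lemma classifySL (M : SL2C) : ∃ A : SL2C,
    (∃ t : ℂˣ, A * M * A⁻¹ = Dm t) ∨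
    (A * M * A⁻¹ = um 1 ∨ A * M * A⁻¹ = -(um 1)) := by
  set a := (M : Matrix (Fin 2) (Fin 2) ℂ) 0 0 with ha
  set b := (M : Matrix (Fin 2) (Fin 2) ℂ) 0 1 with hb
  set c := (M : Matrix (Fin 2) (Fin 2) ℂ) 1 0 with hc
  set d := (M : Matrix (Fin 2) (Fin 2) ℂ) 1 1 with hd
  have hM : (M : Matrix (Fin 2) (Fin 2) ℂ) = !![a, b; c, d] := by
    rw [ha, hb, hc, hd]; exact Matrix.eta_fin_two _
  have hdet : a * d - b * c = 1 := by
    have := M.2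
    rw [Matrix.det_fin_two] at this
    exact this
  obtain ⟨l, hchar⟩ : ∃ l : ℂ, l * l - (a + d) * l + 1 = 0 := by
    obtain ⟨s, hs⟩ := exists_sqrt ((a + d) ^ 2 - 4)
    exact ⟨(a + d + s) / 2, by field_simp; linear_combination hs⟩
  have hl0 : l ≠ 0 := by
    intro h
    rw [h] at hchar
    norm_num at hchar
  have main : ∀ v1 v2 : ℂ, ¬(v1 = 0 ∧ v2 = 0) →
      a * v1 + b * v2 = l * v1 → c * v1 + d * v2 = l * v2 →
      ∃ A : SL2C,
      (∃ t : ℂˣ, A * M * A⁻¹ = Dm t) ∨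
      (A * M * A⁻¹ = um 1 ∨ A * M * A⁻¹ = -(um 1)) := by
    intro v1 v2 hv he1 he2
    obtain ⟨u1, u2, hu⟩ : ∃ u1 u2 : ℂ, v1 * u2 - v2 * u1 = 1 := by
      by_cases h1 : v1 = 0
      · have h2 : v2 ≠ 0 := fun h => hv ⟨h1, h⟩
        exact ⟨-v2⁻¹, 0, by field_simp [h1]; ring⟩
      · exact ⟨0, v1⁻¹, by field_simp; ring⟩
    set B : SL2C := ⟨!![v1, u1; v2, u2], by rw [Matrix.det_fin_two_of]; linear_combination hu⟩
      with hB
    set C : SL2C := ⟨!![u2, -u1; -v2, v1], by rw [Matrix.det_fin_two_of]; linear_combination hu⟩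
      with hC
    have hCB : C * B = 1 := by
      apply Subtype.ext
      rw [Matrix.SpecialLinearGroup.coe_mul, Matrix.SpecialLinearGroup.coe_one]
      show !![u2, -u1; -v2, v1] * !![v1, u1; v2, u2] = _
      rw [Matrix.mul_fin_two, Matrix.one_fin_two]
      apply fin2_ext <;> (first | ring1 | linear_combination hu)
    have hCinv : C⁻¹ = B := (eq_inv_of_mul_eq_one_right hCB).symm
    obtain ⟨β, δ, hN⟩ : ∃ β δ : ℂ,
        ((C * M * C⁻¹ : SL2C) : Matrix (Fin 2) (Fin 2) ℂ) = !![l, β; 0, δ] := by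
      refine ⟨u2 * (a * u1 + b * u2) - u1 * (c * u1 + d * u2),
        -v2 * (a * u1 + b * u2) + v1 * (c * u1 + d * u2), ?_⟩
      rw [hCinv]
      rw [Matrix.SpecialLinearGroup.coe_mul, Matrix.SpecialLinearGroup.coe_mul, hM]
      show !![u2, -u1; -v2, v1] * !![a, b; c, d] * !![v1, u1; v2, u2] = _
      rw [Matrix.mul_fin_two, Matrix.mul_fin_two]
      apply fin2_ext
      · linear_combination u2 * he1 - u1 * he2 + l * hu
      · ring
      · linear_combination -v2 * he1 + v1 * he2
      · ring
    have hld : l * δ = 1 := by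
      have h2 : Matrix.det ((C * M * C⁻¹ : SL2C) : Matrix (Fin 2) (Fin 2) ℂ) = 1 :=
        (C * M * C⁻¹).2
      rw [hN, Matrix.det_fin_two_of] at h2
      linear_combination h2
    have hδval : δ = l⁻¹ := by
      field_simp
      linear_combination hld
    by_cases hβ0 : β = 0
    · -- diagonal
      refine ⟨C, Or.inl ⟨Units.mk0 l hl0, ?_⟩⟩
      apply Subtype.ext
      rw [hN, Dm_coe]
      apply fin2_ext
      · rfl
      · exact hβ0
      · rfl
      · rw [hδval]
        rw [Units.val_inv_eq_inv_val, Units.val_mk0]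
    · by_cases hsq : l * l = 1
      · -- l = ±1, nontrivial unipotent part
        have hδl : δ = l := by
          rw [hδval]
          field_simp
          first | linear_combination hsq | linear_combination -hsq
        have hll : l = 1 ∨ l = -1 := mul_self_eq_one_iff.mp hsq
        obtain ⟨s2, hs2⟩ := exists_sqrt (l * β⁻¹)
        have hs20 : s2 ≠ 0 := by
          intro h
          rw [h] at hs2
          have : l * β⁻¹ = 0 := by rw [← hs2]; ring
          rcases mul_eq_zero.mp this with h' | h'
          · exact hl0 h'
          · exact hβ0 (inv_eq_zero.mp h')
        set su : ℂˣ := Units.mk0 s2 hs20 with hsu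
        refine ⟨Dm su * C, Or.inr ?_⟩
        have hDC : (Dm su * C) * M * (Dm su * C)⁻¹ = Dm su * (C * M * C⁻¹) * (Dm su)⁻¹ := by
          rw [_root_.mul_inv_rev]
          group
        rcases hll with hl1 | hl1
        · -- l = 1 : conjugate of um 1
          left
          have hCMC : C * M * C⁻¹ = um β := by
            apply Subtype.ext
            rw [hN, um_coe, hδl, hl1]
          rw [hDC, hCMC, Dm_mul_um_mul_Dm_inv]
          congr 1
          show s2 ^ 2 * β = 1
          rw [hs2, hl1]
          field_simp
        · -- l = -1 : conjugate of -(um 1)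
          right
          have hCMC : C * M * C⁻¹ = -(um (-β)) := by
            apply Subtype.ext
            rw [hN, neg_um_coe, hδl, hl1]
            norm_num
          rw [hDC, hCMC, mul_neg, neg_mul, Dm_mul_um_mul_Dm_inv]
          congr 2
          show s2 ^ 2 * (-β) = 1
          rw [hs2, hl1]
          field_simp
      · -- l*l ≠ 1 : semisimple, kill β
        have hdl : l - δ ≠ 0 := by
          intro h
          apply hsq
          have : δ = l := by linear_combination -h
          rw [this] at hld
          linear_combination hld
        set x := β / (l - δ) with hx
        refine ⟨um x * C, Or.inl ⟨Units.mk0 l hl0, ?_⟩⟩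
        have hDC : (um x * C) * M * (um x * C)⁻¹ = um x * (C * M * C⁻¹) * (um x)⁻¹ := by
          rw [_root_.mul_inv_rev]
          group
        rw [hDC, um_inv]
        apply Subtype.ext
        rw [Matrix.SpecialLinearGroup.coe_mul, Matrix.SpecialLinearGroup.coe_mul, hN,
          um_coe, um_coe, Dm_coe, Matrix.mul_fin_two, Matrix.mul_fin_two]
        apply fin2_ext
        · rw [Units.val_mk0]; ring
        · rw [hx]; field_simp; ring
        · ring
        · rw [Units.val_inv_eq_inv_val, Units.val_mk0, hδval]; ring
    done
  by_cases h1 : b = 0 ∧ l - a = 0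
  · by_cases h2 : l - d = 0 ∧ c = 0
    · -- scalar matrix
      have hb0 : b = 0 := h1.1
      have hal : a = l := by linear_combination -h1.2
      have hdl2 : d = l := by linear_combination -h2.1
      have hc0 : c = 0 := h2.2
      have hll : l * l = 1 := by
        rw [hal, hdl2, hb0, hc0] at hdet
        linear_combination hdet
      refine ⟨1, Or.inl ⟨Units.mk0 l hl0, ?_⟩⟩
      rw [one_mul, inv_one, mul_one]
      apply Subtype.ext
      rw [hM, Dm_coe]
      apply fin2_ext
      · exact hal
      · exact hb0
      · exact hc0
      · rw [Units.val_inv_eq_inv_val, Units.val_mk0, hdl2]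
        field_simp
        linear_combination hll
    · exact main (l - d) c (by tauto)
        (by linear_combination -hchar - hdet) (by ring)
  · exact main b (l - a) (by tauto)
      (by ring) (by linear_combination -hchar - hdet)

end
end WMaux
namespace WMaux
noncomputable section
open Matrix Multiplicative Complex

lemma units_zpow_surj (k : ℤ) (hk : k ≠ 0) (t : ℂˣ) : ∃ u : ℂˣ, u ^ k = t := by
  have base : ∀ (n : ℕ), n ≠ 0 → ∀ t : ℂˣ, ∃ u : ℂˣ, u ^ (n : ℤ) = t := by
    intro n hn t
    obtain ⟨z, hz⟩ := IsAlgClosed.exists_pow_nat_eq (t : ℂ) (n := n) (Nat.pos_of_ne_zero hn)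
    have hz0 : z ≠ 0 := by
      intro h
      rw [h, zero_pow hn] at hz
      exact t.ne_zero hz.symm
    refine ⟨Units.mk0 z hz0, ?_⟩
    apply Units.ext
    rw [zpow_natCast, Units.val_pow_eq_pow_val, Units.val_mk0]
    exact hz
  rcases lt_or_gt_of_ne hk with h | h
  · obtain ⟨u, hu⟩ := base (-k).toNat (by omega) t⁻¹
    rw [Int.toNat_of_nonneg (by omega : (0:ℤ) ≤ -k)] at hu
    refine ⟨u, ?_⟩
    have : (u ^ k)⁻¹ = t⁻¹ := by rw [← _root_.zpow_neg]; exact hu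
    exact inv_injective this
  · obtain ⟨u, hu⟩ := base k.toNat (by omega) t
    rw [Int.toNat_of_nonneg (by omega : (0:ℤ) ≤ k)] at hu
    exact ⟨u, hu⟩

lemma classifyPSL (cc : PSL2C) : ∃ A : SL2C,
    (∃ t : ℂˣ, cc = pr (A⁻¹ * Dm t * A)) ∨ cc = pr (A⁻¹ * um 1 * A) := by
  obtain ⟨M, rfl⟩ := pr_surj cc
  obtain ⟨A, h⟩ := classifySL M
  have hM : M = A⁻¹ * (A * M * A⁻¹) * A := by group
  refine ⟨A, ?_⟩
  rcases h with ⟨t, ht⟩ | h | h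
  · exact Or.inl ⟨t, by rw [hM, ht]⟩
  · exact Or.inr (by rw [hM, h])
  · refine Or.inr ?_
    rw [hM, h]
    have hne : -(um 1) = (-1 : SL2C) * um 1 := by rw [neg_one_mul]
    rw [hne]
    simp only [_root_.map_mul, pr_neg_one, one_mul]

lemma psl_zpow_surj (k : ℤ) (hk : k ≠ 0) (cc : PSL2C) : ∃ g : PSL2C, g ^ k = cc := by
  obtain ⟨A, hc | hc⟩ := classifyPSL cc
  · obtain ⟨t, rfl⟩ := hc
    obtain ⟨u, hu⟩ := units_zpow_surj k hk t
    refine ⟨pr (A⁻¹ * Dm u * A), ?_⟩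
    rw [← map_zpow]
    congr 1
    have hconj : (A⁻¹ * Dm u * (A⁻¹)⁻¹) ^ k = A⁻¹ * (Dm u) ^ k * (A⁻¹)⁻¹ := conj_zpow
    rw [inv_inv] at hconj
    rw [hconj, Dm_zpow, hu]
  · subst hc
    have hkC : ((k : ℂ)) ≠ 0 := Int.cast_ne_zero.mpr hk
    refine ⟨pr (A⁻¹ * um ((k : ℂ))⁻¹ * A), ?_⟩
    rw [← map_zpow]
    congr 1
    have hconj : (A⁻¹ * um ((k : ℂ))⁻¹ * (A⁻¹)⁻¹) ^ k = A⁻¹ * (um ((k : ℂ))⁻¹) ^ k * (A⁻¹)⁻¹ :=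
      conj_zpow
    rw [inv_inv] at hconj
    rw [hconj, um_zpow]
    congr 2
    field_simp

end
end WMaux
open Multiplicative in
theorem word_map_surjective_of_not_law_of_infinite_dihedral
    (w : FreeGroup (Fin 2))
    (hw : ∃ a b : DihedralGroup 0, wordMap w a b ≠ 1) :
    ∀ c : PSL2C, ∃ g h : PSL2C, wordMap w g h = c := by
  classical
  intro c
  by_cases hodd : Odd ((WMaux.ex w).toAdd)
  · have hn0 : (WMaux.ex w).toAdd ≠ 0 := by
      intro h
      rw [h] at hodd
      norm_num [Int.odd_iff] at hodd
    obtain ⟨g, hg⟩ := WMaux.psl_zpow_surj _ hn0 c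
    exact ⟨g, 1, by rw [WMaux.wordMap_one_right, hg]⟩
  · by_cases hodd2 : Odd ((WMaux.ey w).toAdd)
    · have hm0 : (WMaux.ey w).toAdd ≠ 0 := by
        intro h
        rw [h] at hodd2
        norm_num [Int.odd_iff] at hodd2
      obtain ⟨g, hg⟩ := WMaux.psl_zpow_surj _ hm0 c
      exact ⟨1, g, by rw [WMaux.wordMap_one_left, hg]⟩
    · -- both exponent sums even
      have hne : Even ((WMaux.ex w).toAdd) := Int.not_odd_iff_even.mp hodd
      have hme : Even ((WMaux.ey w).toAdd) := Int.not_odd_iff_even.mp hodd2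
      obtain ⟨a, b, hab⟩ := hw
      -- sign homomorphism to Multiplicative (ZMod 2)
      have hσ1 : (ofAdd (1 : ZMod 2)) * (1 : Multiplicative (ZMod 2)) = 1⁻¹ * ofAdd 1 := by
        simp
      have hσ2 : (ofAdd (1 : ZMod 2)) * ofAdd 1 = 1 := by decide
      set σ := WMaux.dihedralHom (1 : Multiplicative (ZMod 2)) (ofAdd 1) hσ1 hσ2 with hσdef
      have hsq : ∀ x : Multiplicative (ZMod 2), x * x = 1 := by decide
      have pow_even : ∀ (x : Multiplicative (ZMod 2)) (j : ℤ), Even j → x ^ j = 1 := by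
        intro x j hj
        obtain ⟨i, rfl⟩ := hj
        rw [zpow_add]
        exact hsq _
      have hσw : σ (wordMap w a b) = 1 := by
        rw [WMaux.wordMap_map, WMaux.wordMap_comm, pow_even _ _ hne, pow_even _ _ hme, one_mul]
      obtain ⟨k, hk, hk0⟩ : ∃ k : ZMod 0,
          wordMap w a b = DihedralGroup.r k ∧ WMaux.zc k ≠ 0 := by
        cases hwab : wordMap w a b with
        | r i =>
          refine ⟨i, rfl, ?_⟩
          intro h
          apply hab
          rw [hwab]
          have hi : i = 0 := h
          rw [hi]
          exact DihedralGroup.one_def.symm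
        | sr i =>
          exfalso
          rw [hwab, hσdef, WMaux.dihedralHom_sr, one_zpow, mul_one] at hσw
          exact absurd hσw (by decide)
      obtain ⟨A, hc | hc⟩ := WMaux.classifyPSL c
      · -- semisimple case : use the diagonal representation of D∞
        obtain ⟨t, rfl⟩ := hc
        obtain ⟨u, hu⟩ := WMaux.units_zpow_surj (WMaux.zc k) hk0 t
        have h1 : WMaux.pr WMaux.Sm * WMaux.pr (WMaux.Dm u) =
            (WMaux.pr (WMaux.Dm u))⁻¹ * WMaux.pr WMaux.Sm := by
          rw [← _root_.map_mul, ← map_inv, ← _root_.map_mul, WMaux.Sm_mul_Dm]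
        have h2 : WMaux.pr WMaux.Sm * WMaux.pr WMaux.Sm = 1 := by
          rw [← _root_.map_mul, WMaux.Sm_mul_Sm, WMaux.pr_neg_one]
        set ρ := WMaux.dihedralHom (WMaux.pr (WMaux.Dm u)) (WMaux.pr WMaux.Sm) h1 h2 with hρdef
        have hval : wordMap w (ρ a) (ρ b) = WMaux.pr (WMaux.Dm t) := by
          rw [← WMaux.wordMap_map, hk, hρdef, WMaux.dihedralHom_r, ← map_zpow, WMaux.Dm_zpow, hu]
        set γ := WMaux.pr A⁻¹ with hγdef
        refine ⟨γ * ρ a * γ⁻¹, γ * ρ b * γ⁻¹, ?_⟩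
        rw [WMaux.wordMap_conj, hval, hγdef, ← map_inv, ← _root_.map_mul, ← _root_.map_mul,
          inv_inv]
      · -- unipotent case : use the unipotent representation of D∞
        have hkC : ((WMaux.zc k : ℂ)) ≠ 0 := Int.cast_ne_zero.mpr hk0
        obtain ⟨s2, hs2⟩ := WMaux.exists_sqrt ((WMaux.zc k : ℂ))⁻¹
        have hs20 : s2 ≠ 0 := by
          intro h
          rw [h] at hs2
          have : ((WMaux.zc k : ℂ))⁻¹ = 0 := by rw [← hs2]; ring
          exact hkC (inv_eq_zero.mp this)
        have h1 : WMaux.pr WMaux.Jm * WMaux.pr (WMaux.um 1) =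
            (WMaux.pr (WMaux.um 1))⁻¹ * WMaux.pr WMaux.Jm := by
          rw [← _root_.map_mul, ← map_inv, ← _root_.map_mul, WMaux.Jm_mul_um]
        have h2 : WMaux.pr WMaux.Jm * WMaux.pr WMaux.Jm = 1 := by
          rw [← _root_.map_mul, WMaux.Jm_mul_Jm, WMaux.pr_neg_one]
        set ρ := WMaux.dihedralHom (WMaux.pr (WMaux.um 1)) (WMaux.pr WMaux.Jm) h1 h2 with hρdef
        have hval : wordMap w (ρ a) (ρ b) = WMaux.pr (WMaux.um ((WMaux.zc k : ℂ))) := by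
          rw [← WMaux.wordMap_map, hk, hρdef, WMaux.dihedralHom_r, ← map_zpow, WMaux.um_zpow,
            mul_one]
        set su : ℂˣ := Units.mk0 s2 hs20 with hsu
        have hconj : WMaux.Dm su * WMaux.um ((WMaux.zc k : ℂ)) * (WMaux.Dm su)⁻¹ =
            WMaux.um 1 := by
          rw [WMaux.Dm_mul_um_mul_Dm_inv]
          congr 1
          rw [hsu, Units.val_mk0, hs2]
          field_simp
        have hBig : (A⁻¹ * WMaux.Dm su) * WMaux.um ((WMaux.zc k : ℂ)) * (A⁻¹ * WMaux.Dm su)⁻¹ =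
            A⁻¹ * WMaux.um 1 * A := by
          conv_rhs => rw [← hconj]
          rw [_root_.mul_inv_rev, inv_inv]
          group
        set γ := WMaux.pr (A⁻¹ * WMaux.Dm su) with hγdef
        refine ⟨γ * ρ a * γ⁻¹, γ * ρ b * γ⁻¹, ?_⟩
        rw [WMaux.wordMap_conj, hval, hγdef, ← map_inv, ← _root_.map_mul, ← _root_.map_mul,
          hBig, hc]
end

section
/- For every n ≥ 1, the n-th Engel word map eₙ is surjective on PSL(2,ℂ): for every c ∈ PSL(2,ℂ) there exist g, h ∈ PSL(2,ℂ) with eₙ(g,h) = c. -/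
open scoped commutatorElement

/-- The Engel words: `engel 1 = ⁅x,y⁆`, `engel (n+1) = ⁅engel n, y⁆`
(here `engel 0 = x`, so that `engel 1 = ⁅x, y⁆`). -/
def engel : ℕ → FreeGroup (Fin 2)
  | 0 => FreeGroup.of 0
  | n + 1 => ⁅engel n, FreeGroup.of 1⁆

lemma wordMap_engel_zero {G : Type*} [Group G] (g h : G) : wordMap (engel 0) g h = g := by
  simp [wordMap, engel]

lemma wordMap_engel_succ {G : Type*} [Group G] (n : ℕ) (g h : G) :
    wordMap (engel (n+1)) g h = ⁅wordMap (engel n) g h, h⁆ := by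
  simp [wordMap, engel, map_commutatorElement]

lemma wordMap_map {G H : Type*} [Group G] [Group H] (f : G →* H) (w : FreeGroup (Fin 2))
    (g h : G) : wordMap w (f g) (f h) = f (wordMap w g h) := by
  have : FreeGroup.lift ![f g, f h] = f.comp (FreeGroup.lift ![g, h]) := by
    apply FreeGroup.ext_hom
    intro i
    fin_cases i <;> simp
  simp [wordMap, this]

noncomputable def Dl (l : ℂ) (hl : l ≠ 0) : SL2C :=
  ⟨!![l, 0; 0, l⁻¹], by simp [Matrix.det_fin_two_of, mul_inv_cancel₀ hl]⟩

def Pv (s : ℂ) : SL2C := ⟨!![1, s; 0, 1], by simp [Matrix.det_fin_two_of]⟩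

def Wm : SL2C := ⟨!![0, 1; -1, 0], by simp [Matrix.det_fin_two_of]⟩

lemma Pv_mul (s t : ℂ) : Pv s * Pv t = Pv (s + t) := by
  apply Subtype.ext
  simp only [Matrix.SpecialLinearGroup.coe_mul]
  simp [Pv, Matrix.mul_fin_two]
  ring_nf

lemma Pv_inv (s : ℂ) : (Pv s)⁻¹ = Pv (-s) := by
  apply inv_eq_of_mul_eq_one_right
  rw [Pv_mul]
  apply Subtype.ext
  simp [Pv]
  exact Matrix.one_fin_two.symm

lemma Dl_mul (a b : ℂ) (ha : a ≠ 0) (hb : b ≠ 0) :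
    Dl a ha * Dl b hb = Dl (a*b) (mul_ne_zero ha hb) := by
  apply Subtype.ext
  simp only [Matrix.SpecialLinearGroup.coe_mul]
  simp [Dl, Matrix.mul_fin_two, mul_inv]
  ring_nf

lemma Dl_inv (a : ℂ) (ha : a ≠ 0) : (Dl a ha)⁻¹ = Dl a⁻¹ (inv_ne_zero ha) := by
  apply inv_eq_of_mul_eq_one_right
  rw [Dl_mul a a⁻¹ ha (inv_ne_zero ha)]
  apply Subtype.ext
  simp [Dl, mul_inv_cancel₀ ha]
  exact Matrix.one_fin_two.symm

lemma Wm_inv : Wm⁻¹ = (⟨!![0, -1; 1, 0], by simp [Matrix.det_fin_two_of]⟩ : SL2C) := by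
  apply inv_eq_of_mul_eq_one_right
  apply Subtype.ext
  show (Wm : Matrix (Fin 2) (Fin 2) ℂ) * !![0, -1; 1, 0] = 1
  simp [Wm, Matrix.mul_fin_two]
  exact Matrix.one_fin_two.symm

lemma comm_Dl_Wm (l : ℂ) (hl : l ≠ 0) : ⁅Dl l hl, Wm⁆ = Dl (l*l) (mul_ne_zero hl hl) := by
  rw [commutatorElement_def, Dl_inv, Wm_inv]
  apply Subtype.ext
  show (Dl l hl).1 * Wm.1 * (Dl l⁻¹ (inv_ne_zero hl)).1 * !![0, -1; 1, 0] = (Dl (l*l) (mul_ne_zero hl hl)).1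
  simp [Dl, Wm, Matrix.mul_fin_two, inv_inv]

lemma comm_Pv_Dl (s a : ℂ) (ha : a ≠ 0) (ha2 : a * a = 2) :
    ⁅Pv s, Dl a ha⁆ = Pv (-s) := by
  rw [commutatorElement_def, Pv_inv, Dl_inv]
  apply Subtype.ext
  simp only [Matrix.SpecialLinearGroup.coe_mul]
  simp [Pv, Dl, Matrix.mul_fin_two]
  have e1 : (-(a*s) + s*a⁻¹)*a = -s := by
    field_simp
    linear_combination (-s) * ha2
  rw [mul_inv_cancel₀ ha, inv_mul_cancel₀ ha, e1]
  exact ⟨⟨rfl, rfl⟩, rfl⟩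

lemma en_Dl (l : ℂ) (hl : l ≠ 0) (n : ℕ) :
    wordMap (engel n) (Dl l hl) Wm = Dl (l^(2^n)) (pow_ne_zero _ hl) := by
  induction n with
  | zero => simp [wordMap_engel_zero]
  | succ m ih =>
    rw [wordMap_engel_succ, ih, comm_Dl_Wm]
    have : l ^ 2 ^ m * l ^ 2 ^ m = l ^ 2 ^ (m+1) := by
      rw [← pow_add]
      congr 1
      ring
    simp_rw [this]

lemma en_Pv (s a : ℂ) (ha : a ≠ 0) (ha2 : a * a = 2) (n : ℕ) :
    wordMap (engel n) (Pv s) (Dl a ha) = Pv ((-1)^n * s) := by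
  induction n with
  | zero => simp [wordMap_engel_zero]
  | succ m ih =>
    rw [wordMap_engel_succ, ih, comm_Pv_Dl _ _ _ ha2]
    congr 1
    ring

noncomputable def Tl (μ s : ℂ) (hμ : μ ≠ 0) : SL2C :=
  ⟨!![μ, s; 0, μ⁻¹], by simp [Matrix.det_fin_two_of, mul_inv_cancel₀ hμ]⟩

lemma tri (A : SL2C) : ∃ (k : SL2C) (μ s : ℂ) (hμ : μ ≠ 0),
    A = k * Tl μ s hμ * k⁻¹ := by
  obtain ⟨M, hdet⟩ := A
  rw [Matrix.det_fin_two] at hdet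
  set a := M 0 0 with ha'
  set b := M 0 1 with hb'
  set c := M 1 0 with hc'
  set d := M 1 1 with hd'
  have hMeq : M = !![a, b; c, d] := by
    ext i j; fin_cases i <;> fin_cases j <;> rfl
  by_cases hc : c = 0
  · have had : a * d = 1 := by rw [← hdet, hc]; ring
    have ha : a ≠ 0 := left_ne_zero_of_mul_eq_one had
    have hd : d = a⁻¹ := by field_simp; linear_combination had
    refine ⟨1, a, b, ha, ?_⟩
    rw [one_mul, inv_one, mul_one]
    apply Subtype.ext
    show M = _
    rw [hMeq, hc, hd]
    rfl
  · obtain ⟨δ, hδ⟩ := IsAlgClosed.exists_pow_nat_eq (k := ℂ) ((a+d)^2 - 4) zero_lt_two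
    obtain ⟨μ, hquad⟩ : ∃ μ : ℂ, μ * μ - (a + d) * μ + 1 = 0 :=
      ⟨(a + d + δ)/2, by field_simp; linear_combination hδ⟩
    have hμ : μ ≠ 0 := by
      intro h
      rw [h] at hquad
      simp at hquad
    refine ⟨⟨!![μ - d, -c⁻¹; c, 0], by simp [Matrix.det_fin_two_of, hc]⟩, μ, -c⁻¹, hμ, ?_⟩
    apply eq_mul_inv_of_mul_eq
    apply Subtype.ext
    show M * _ = _
    rw [hMeq]
    show !![a, b; c, d] * !![μ - d, -c⁻¹; c, 0] = !![μ - d, -c⁻¹; c, 0] * !![μ, -c⁻¹; 0, μ⁻¹]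
    ext i j
    fin_cases i <;> fin_cases j <;> simp [Matrix.mul_apply, Fin.sum_univ_two]
    · linear_combination -hdet - hquad
    · field_simp
      linear_combination hquad
    · ring

lemma Dl_congr {a b : ℂ} (h : a = b) (ha : a ≠ 0) (hb : b ≠ 0) : Dl a ha = Dl b hb := by
  subst h; rfl

lemma Tl_decomp_diag (μ s : ℂ) (hμ : μ ≠ 0) (h1 : μ * μ ≠ 1) :
    ∃ x : ℂ, Tl μ s hμ = Pv x * Dl μ hμ * (Pv x)⁻¹ := by
  have hd : 1 - μ * μ ≠ 0 := fun h => h1 (by linear_combination -h)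
  obtain ⟨x, hx⟩ : ∃ x : ℂ, x * μ⁻¹ - μ * x = s :=
    ⟨s * μ / (1 - μ * μ), by have hd' : 1 - μ ^ 2 ≠ 0 := (by rw [sq]; exact hd); field_simp⟩
  refine ⟨x, ?_⟩
  rw [Pv_inv]
  apply Subtype.ext
  show _ = (_ * _ : Matrix (Fin 2) (Fin 2) ℂ)
  simp only [Matrix.SpecialLinearGroup.coe_mul]
  ext i j
  fin_cases i <;> fin_cases j <;>
    simp [Tl, Pv, Dl, Matrix.mul_apply, Fin.sum_univ_two] <;> linear_combination -hx

lemma Tl_one (s : ℂ) : Tl 1 s one_ne_zero = Pv s := by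
  apply Subtype.ext
  simp [Tl, Pv]

lemma Tl_negone (s : ℂ) : Tl (-1) s (by norm_num) =
    Dl (-1) (by norm_num) * Pv (-s) := by
  apply Subtype.ext
  simp only [Matrix.SpecialLinearGroup.coe_mul]
  simp [Tl, Dl, Pv, Matrix.mul_fin_two]

lemma negone_center : Dl (-1) (by norm_num) ∈ Subgroup.center SL2C := by
  rw [Subgroup.mem_center_iff]
  intro g
  apply Subtype.ext
  show (g : Matrix (Fin 2) (Fin 2) ℂ) * _ = _ * (g : Matrix (Fin 2) (Fin 2) ℂ)
  ext i j
  fin_cases i <;> fin_cases j <;>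
    simp [Dl, Matrix.mul_apply, Fin.sum_univ_two] <;> ring

lemma mk_center_mul (z x : SL2C) (hz : z ∈ Subgroup.center SL2C) :
    (QuotientGroup.mk (z * x) : PSL2C) = QuotientGroup.mk x := by
  rw [QuotientGroup.mk_mul, (QuotientGroup.eq_one_iff z).mpr hz, one_mul]

lemma wordMap_conj {G : Type*} [Group G] (w : FreeGroup (Fin 2)) (k g h : G) :
    wordMap w (k * g * k⁻¹) (k * h * k⁻¹) = k * wordMap w g h * k⁻¹ := by
  simpa [MulAut.conj_apply] using (wordMap_map (MulAut.conj k).toMonoidHom w g h)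

theorem engel_word_surjective_on_PSL2C (n : ℕ) (hn : 1 ≤ n) (c : PSL2C) :
    ∃ g h : PSL2C, wordMap (engel n) g h = c := by
  obtain ⟨A, rfl⟩ := QuotientGroup.mk_surjective c
  obtain ⟨k, μ, s, hμ, hA⟩ := tri A
  suffices h : ∃ B C : SL2C,
      (QuotientGroup.mk (wordMap (engel n) B C) : PSL2C) = QuotientGroup.mk A by
    obtain ⟨B, C, hBC⟩ := h
    refine ⟨QuotientGroup.mk B, QuotientGroup.mk C, ?_⟩
    have := wordMap_map (QuotientGroup.mk' (Subgroup.center SL2C)) (engel n) B C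
    simpa using this.trans hBC
  by_cases h1 : μ * μ = 1
  · -- parabolic / central case
    obtain ⟨a, ha2⟩ : ∃ a : ℂ, a * a = 2 := by
      obtain ⟨a, ha⟩ := IsAlgClosed.exists_pow_nat_eq (k := ℂ) 2 zero_lt_two
      exact ⟨a, by rw [← ha]; ring⟩
    have ha : a ≠ 0 := by
      intro h; rw [h, mul_zero] at ha2; norm_num at ha2
    have key : ∀ s' : ℂ, ∃ B C : SL2C,
        wordMap (engel n) B C = k * Pv s' * k⁻¹ := by
      intro s'
      refine ⟨k * Pv ((-1)^n * s') * k⁻¹, k * Dl a ha * k⁻¹, ?_⟩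
      rw [wordMap_conj, en_Pv _ _ _ ha2]
      congr 2
      rw [← mul_assoc, ← mul_pow]
      norm_num
    rcases mul_self_eq_one_iff.mp h1 with h | h
    · subst h
      obtain ⟨B, C, hBC⟩ := key s
      refine ⟨B, C, ?_⟩
      rw [hBC, hA, Tl_one]
    · subst h
      obtain ⟨B, C, hBC⟩ := key (-s)
      refine ⟨B, C, ?_⟩
      rw [hBC, hA, Tl_negone]
      have : k * (Dl (-1) (by norm_num) * Pv (-s)) * k⁻¹ =
          Dl (-1) (by norm_num) * (k * Pv (-s) * k⁻¹) := by
        have hcomm := Subgroup.mem_center_iff.mp negone_center k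
        rw [← mul_assoc, ← mul_assoc, hcomm]
        group
      rw [this, mk_center_mul _ _ negone_center]
  · -- diagonalizable case
    obtain ⟨l, hl⟩ := IsAlgClosed.exists_pow_nat_eq (k := ℂ) μ (n := 2^n) (by positivity)
    have hl0 : l ≠ 0 := by
      intro h
      apply hμ
      rw [← hl, h]
      exact zero_pow (by positivity)
    obtain ⟨x, hx⟩ := Tl_decomp_diag μ s hμ h1
    refine ⟨(k * Pv x) * Dl l hl0 * (k * Pv x)⁻¹, (k * Pv x) * Wm * (k * Pv x)⁻¹, ?_⟩
    rw [wordMap_conj, en_Dl, Dl_congr hl (pow_ne_zero _ hl0) hμ, hA, hx]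
    rw [mul_inv_rev]
    group
end

section
/- Every element of PSL(2,ℂ) is a product of two involutions: for every c ∈ PSL(2,ℂ) there exist a, b ∈ PSL(2,ℂ) with a² = 1, b² = 1, and c = ab. -/
open Matrix Complex

lemma matrix_sq_neg_one (A : Matrix (Fin 2) (Fin 2) ℂ) (hd : A.det = 1)
    (ht : A 0 0 + A 1 1 = 0) : A * A = -1 := by
  rw [Matrix.det_fin_two] at hd
  ext i j
  fin_cases i <;> fin_cases j <;>
    simp [Matrix.mul_apply, Fin.sum_univ_two, Matrix.one_apply]
  · linear_combination A 0 0 * ht - hd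
  · linear_combination A 0 1 * ht
  · linear_combination A 1 0 * ht
  · linear_combination A 1 1 * ht - hd

lemma key (M S : SL2C) (htr : S.1 0 0 + S.1 1 1 = 0)
    (htr2 : (S.1 * M.1) 0 0 + (S.1 * M.1) 1 1 = 0) :
    ∃ a b : PSL2C, a ^ 2 = 1 ∧ b ^ 2 = 1 ∧ (↑M : PSL2C) = a * b := by
  have hdN : (-1 : Matrix (Fin 2) (Fin 2) ℂ).det = 1 := by
    simp [Matrix.det_fin_two]
  set N : SL2C := ⟨-1, hdN⟩ with hN
  have hNC : N ∈ Subgroup.center SL2C := by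
    rw [Subgroup.mem_center_iff]
    intro g
    apply Subtype.ext
    show g.1 * (-1) = (-1) * g.1
    simp
  have hNN : N * N = 1 := by
    apply Subtype.ext
    show (-1 : Matrix (Fin 2) (Fin 2) ℂ) * (-1) = 1
    simp
  have hSS : S * S = N := Subtype.ext (matrix_sq_neg_one S.1 S.2 htr)
  have hSinv : S⁻¹ = N * S := by
    exact (eq_inv_of_mul_eq_one_left (by rw [mul_assoc, hSS, hNN])).symm
  set T : SL2C := S⁻¹ * M with hT
  have hTmat : T.1 = -(S.1 * M.1) := by
    rw [hT, hSinv]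
    show ((-1 : Matrix (Fin 2) (Fin 2) ℂ) * S.1) * M.1 = -(S.1 * M.1)
    simp
  have hTtr : T.1 0 0 + T.1 1 1 = 0 := by
    rw [hTmat]
    simp only [Matrix.neg_apply]
    linear_combination -htr2
  have hTT : T * T = N := Subtype.ext (matrix_sq_neg_one T.1 T.2 hTtr)
  have hNone : ((N : SL2C) : PSL2C) = 1 := (QuotientGroup.eq_one_iff N).mpr hNC
  refine ⟨(↑S : PSL2C), (↑T : PSL2C), ?_, ?_, ?_⟩
  · rw [sq, ← QuotientGroup.mk_mul, hSS, hNone]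
  · rw [sq, ← QuotientGroup.mk_mul, hTT, hNone]
  · rw [← QuotientGroup.mk_mul, hT, mul_inv_cancel_left]

theorem PSL2C_product_of_two_involutions (c : PSL2C) :
    ∃ a b : PSL2C, a ^ 2 = 1 ∧ b ^ 2 = 1 ∧ c = a * b := by
  obtain ⟨M, rfl⟩ := QuotientGroup.mk_surjective c
  set p := M.1 0 0 with hp
  set q := M.1 0 1 with hq
  set r := M.1 1 0 with hr
  set s := M.1 1 1 with hs
  by_cases hq0 : q ≠ 0
  · have hd : (!![I, 0; -I * (p - s) / q, -I] : Matrix (Fin 2) (Fin 2) ℂ).det = 1 := by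
      simp [Matrix.det_fin_two]
    apply key M ⟨_, hd⟩
    · show I + -I = 0; ring
    · show (!![I, 0; -I * (p - s) / q, -I] * M.1) 0 0 +
          (!![I, 0; -I * (p - s) / q, -I] * M.1) 1 1 = 0
      simp only [Matrix.mul_apply, Fin.sum_univ_two, ← hp, ← hq, ← hr, ← hs]
      simp [Matrix.cons_val_zero, Matrix.cons_val_one]
      field_simp
      ring
  · push_neg at hq0
    by_cases hr0 : r ≠ 0
    · have hd : (!![I, -I * (p - s) / r; 0, -I] : Matrix (Fin 2) (Fin 2) ℂ).det = 1 := by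
        simp [Matrix.det_fin_two]
      apply key M ⟨_, hd⟩
      · show I + -I = 0; ring
      · show (!![I, -I * (p - s) / r; 0, -I] * M.1) 0 0 +
            (!![I, -I * (p - s) / r; 0, -I] * M.1) 1 1 = 0
        simp only [Matrix.mul_apply, Fin.sum_univ_two, ← hp, ← hq, ← hr, ← hs]
        simp [Matrix.cons_val_zero, Matrix.cons_val_one]
        field_simp
        ring
    · push_neg at hr0
      have hd : (!![0, 1; -1, 0] : Matrix (Fin 2) (Fin 2) ℂ).det = 1 := by
        simp [Matrix.det_fin_two]
      apply key M ⟨_, hd⟩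
      · show (0 : ℂ) + 0 = 0; ring
      · show ((!![0, 1; -1, 0] : Matrix (Fin 2) (Fin 2) ℂ) * M.1) 0 0 +
            ((!![0, 1; -1, 0] : Matrix (Fin 2) (Fin 2) ℂ) * M.1) 1 1 = 0
        simp only [Matrix.mul_apply, Fin.sum_univ_two, ← hp, ← hq, ← hr, ← hs]
        simp [hq0, hr0]
end

section
/- (Tôyama–Gotô) The commutator word map is surjective on the special unitary group SU(m) for every m ≥ 1: every element c ∈ SU(m) can be written as c = xyx⁻¹y⁻¹ for some x, y ∈ SU(m). -/
open Matrix Complex Polynomial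

lemma infinite_unit_circle : {z : ℂ | ‖z‖ = 1}.Infinite := by
  have h1 : (Set.Ioc (-Real.pi) Real.pi).Infinite :=
    Set.Ioc_infinite (by linarith [Real.pi_pos])
  have : Infinite (Set.Ioc (-Real.pi) Real.pi) := Set.infinite_coe_iff.mpr h1
  have hC : Infinite Circle :=
    Infinite.of_injective (fun x : Set.Ioc (-Real.pi) Real.pi => Circle.argEquiv.symm x) (Circle.argEquiv.symm.injective)
  exact Set.infinite_of_injective_forall_mem (f := fun z : Circle => (z : ℂ))
    (fun a b h => Subtype.ext h) (fun z => by simpa using Circle.norm_coe z)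

lemma exists_unit_nonroot (p : Polynomial ℂ) (hp : p ≠ 0) :
    ∃ z : ℂ, ‖z‖ = 1 ∧ p.eval z ≠ 0 := by
  obtain ⟨z, hz, hz2⟩ := infinite_unit_circle.exists_notMem_finset p.roots.toFinset
  refine ⟨z, hz, fun h => hz2 ?_⟩
  simp only [Multiset.mem_toFinset]
  exact (Polynomial.mem_roots hp).mpr h

lemma eval_charpoly' {m : ℕ} (M : Matrix (Fin m) (Fin m) ℂ) (z : ℂ) :
    M.charpoly.eval z = (z • (1 : Matrix (Fin m) (Fin m) ℂ) - M).det := by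
  rw [Matrix.charpoly, ← Polynomial.coe_evalRingHom, RingHom.map_det]
  congr 1
  ext i j
  by_cases h : i = j <;>
    simp [h, charmatrix_apply, Matrix.one_apply, Matrix.smul_apply]

lemma exists_unit_good {m : ℕ} (M : Matrix (Fin m) (Fin m) ℂ) :
    ∃ z : ℂ, ‖z‖ = 1 ∧ IsUnit (z • (1 : Matrix (Fin m) (Fin m) ℂ) - M).det := by
  obtain ⟨z, hz, hz2⟩ := exists_unit_nonroot M.charpoly M.charpoly_monic.ne_zero
  exact ⟨z, hz, isUnit_iff_ne_zero.mpr (by rwa [← eval_charpoly'])⟩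

lemma unitary_diagonalizable {m : ℕ} (c : Matrix (Fin m) (Fin m) ℂ)
    (hc : c ∈ Matrix.unitaryGroup (Fin m) ℂ) :
    ∃ V ∈ Matrix.unitaryGroup (Fin m) ℂ, ∃ d : Fin m → ℂ,
      c = V * Matrix.diagonal d * star V := by
  classical
  obtain ⟨z, hz, hzdet⟩ := exists_unit_good c
  have hz0 : z ≠ 0 := by intro h; simp [h] at hz
  set μ : ℂ := -z⁻¹ with hμ
  have hμ0 : μ ≠ 0 := by simp [hμ, hz0]
  set u : Matrix (Fin m) (Fin m) ℂ := μ • c with hu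
  have hμnorm : ‖μ‖ = 1 := by simp [hμ, norm_inv, hz]
  have hμconj : (starRingEnd ℂ) μ * μ = 1 := by
    rw [mul_comm, Complex.mul_conj]
    norm_cast
    simp [Complex.normSq_eq_norm_sq, hμnorm]
  have hcsc : star c * c = 1 := Matrix.mem_unitaryGroup_iff'.mp hc
  have hccs : c * star c = 1 := Matrix.mem_unitaryGroup_iff.mp hc
  have hsu : star u * u = 1 := by
    rw [hu, star_smul, Matrix.smul_mul, Matrix.mul_smul, smul_smul, hcsc,
      show star μ = (starRingEnd ℂ) μ from rfl, hμconj, one_smul]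
  have hus : u * star u = 1 := by
    rw [hu, star_smul, Matrix.smul_mul, Matrix.mul_smul, smul_smul, hccs, mul_comm,
      show star μ = (starRingEnd ℂ) μ from rfl, hμconj, one_smul]
  have hkey : (1 : Matrix (Fin m) (Fin m) ℂ) + u = (-μ) • (z • 1 - c) := by
    rw [smul_sub, smul_smul, hu]
    have : -μ * z = 1 := by rw [hμ, neg_neg, inv_mul_cancel₀ hz0]
    rw [this, one_smul]
    module
  have h1udet : IsUnit (1 + u).det := by
    rw [hkey, Matrix.det_smul]
    exact (IsUnit.pow _ (isUnit_iff_ne_zero.mpr (neg_ne_zero.mpr hμ0))).mul hzdet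
  have hinv_mul : (1 + u)⁻¹ * (1 + u) = 1 := Matrix.nonsing_inv_mul _ h1udet
  have hmul_inv : (1 + u) * (1 + u)⁻¹ = 1 := Matrix.mul_nonsing_inv _ h1udet
  set H : Matrix (Fin m) (Fin m) ℂ :=
    (-Complex.I) • ((1 - u) * (1 + u)⁻¹) with hH_def
  -- commute facts
  have hcomm : (1 + u)⁻¹ * (u - 1) = (u - 1) * (1 + u)⁻¹ := by
    have hc' : (u - 1) * (1 + u) = (1 + u) * (u - 1) := by noncomm_ring
    calc (1 + u)⁻¹ * (u - 1) = (1 + u)⁻¹ * (u - 1) * ((1 + u) * (1 + u)⁻¹) := by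
          rw [hmul_inv, mul_one]
      _ = (1 + u)⁻¹ * ((u - 1) * (1 + u)) * (1 + u)⁻¹ := by noncomm_ring
      _ = (1 + u)⁻¹ * ((1 + u) * (u - 1)) * (1 + u)⁻¹ := by rw [hc']
      _ = ((1 + u)⁻¹ * (1 + u)) * ((u - 1) * (1 + u)⁻¹) := by noncomm_ring
      _ = (u - 1) * (1 + u)⁻¹ := by rw [hinv_mul, one_mul]
  have hH : H.IsHermitian := by
    have h1s : (1 : Matrix (Fin m) (Fin m) ℂ) + star u = star u * (1 + u) := by
      rw [mul_add, mul_one, hsu, add_comm]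
    have h1s_inv : (1 + star u)⁻¹ = (1 + u)⁻¹ * u := by
      rw [h1s, Matrix.mul_inv_rev, Matrix.inv_eq_right_inv hsu]
    have h1ms : (1 : Matrix (Fin m) (Fin m) ℂ) - star u = star u * (u - 1) := by
      rw [mul_sub, mul_one, hsu]
    show Hᴴ = H
    rw [hH_def, Matrix.conjTranspose_smul, Matrix.conjTranspose_mul,
      Matrix.conjTranspose_nonsing_inv, Matrix.conjTranspose_add, Matrix.conjTranspose_sub,
      Matrix.conjTranspose_one, ← Matrix.star_eq_conjTranspose u, h1s_inv, h1ms]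
    have : star (-Complex.I) = Complex.I := by simp
    rw [this]
    calc Complex.I • ((1 + u)⁻¹ * u * (star u * (u - 1)))
        = Complex.I • ((1 + u)⁻¹ * ((u * star u) * (u - 1))) := by noncomm_ring
      _ = Complex.I • ((1 + u)⁻¹ * (u - 1)) := by rw [hus, one_mul]
      _ = Complex.I • ((u - 1) * (1 + u)⁻¹) := by rw [hcomm]
      _ = (-Complex.I) • ((1 - u) * (1 + u)⁻¹) := by
          rw [neg_smul, ← smul_neg]; congr 1; noncomm_ring
  -- spectral theorem
  set V := hH.eigenvectorUnitary with hV_def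
  have hVmem : (V : Matrix (Fin m) (Fin m) ℂ) ∈ Matrix.unitaryGroup (Fin m) ℂ := V.2
  set lam := hH.eigenvalues with hlam
  set Λ : Matrix (Fin m) (Fin m) ℂ := Matrix.diagonal (RCLike.ofReal ∘ lam) with hΛ_def
  have hspec : H = (V : Matrix (Fin m) (Fin m) ℂ) * Λ * star (V : Matrix (Fin m) (Fin m) ℂ) :=
    hH.spectral_theorem
  have hVsV : star (V : Matrix (Fin m) (Fin m) ℂ) * V = 1 := Matrix.mem_unitaryGroup_iff'.mp hVmem
  have hVVs : (V : Matrix (Fin m) (Fin m) ℂ) * star (V : Matrix (Fin m) (Fin m) ℂ) = 1 :=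
    Matrix.mem_unitaryGroup_iff.mp hVmem
  have hofReal : ∀ x : ℝ, (RCLike.ofReal x : ℂ) = (x : ℂ) := fun x => rfl
  set d0 : Fin m → ℂ := fun k => (Complex.I - (lam k : ℂ))⁻¹ * (Complex.I + (lam k : ℂ)) with hd0
  have hne : ∀ k, Complex.I - (lam k : ℂ) ≠ 0 := by
    intro k h
    have := congrArg Complex.im h
    simp at this
  have hA : H * (1 + u) = (-Complex.I) • (1 - u) := by
    rw [hH_def, Matrix.smul_mul, mul_assoc, hinv_mul, mul_one]
  have hB : (Complex.I • 1 - H) * u = Complex.I • (1 : Matrix (Fin m) (Fin m) ℂ) + H := by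
    have hA' : H + H * u = -(Complex.I • (1 : Matrix (Fin m) (Fin m) ℂ)) + Complex.I • u := by
      have h2 : H * (1 + u) = H + H * u := by rw [mul_add, mul_one]
      rw [← h2, hA, smul_sub]
      module
    have hHu : H * u = -(Complex.I • (1 : Matrix (Fin m) (Fin m) ℂ)) + Complex.I • u - H := by
      rw [← hA']; abel
    rw [Matrix.sub_mul, Matrix.smul_mul, one_mul, hHu]
    abel
  have hΛdiag : Complex.I • (1 : Matrix (Fin m) (Fin m) ℂ) - Λ
      = Matrix.diagonal (fun k => Complex.I - (lam k : ℂ)) := by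
    rw [Matrix.smul_one_eq_diagonal, hΛ_def, Matrix.diagonal_sub]
    rfl
  have hΛdiag' : Complex.I • (1 : Matrix (Fin m) (Fin m) ℂ) + Λ
      = Matrix.diagonal (fun k => Complex.I + (lam k : ℂ)) := by
    rw [Matrix.smul_one_eq_diagonal, hΛ_def, Matrix.diagonal_add]
    rfl
  have hdiag : (Complex.I • 1 - Λ) * Matrix.diagonal d0 = Complex.I • 1 + Λ := by
    rw [hΛdiag, hΛdiag', Matrix.diagonal_mul_diagonal]
    refine congrArg Matrix.diagonal (funext fun k => ?_)
    rw [← mul_assoc, mul_inv_cancel₀ (hne k), one_mul]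
  have hsmul1 : ∀ M : Matrix (Fin m) (Fin m) ℂ, M ∈ Matrix.unitaryGroup (Fin m) ℂ →
      M * (Complex.I • 1) * star M = Complex.I • 1 := by
    intro M hM
    rw [Matrix.mul_smul, mul_one, Matrix.smul_mul, Matrix.mem_unitaryGroup_iff.mp hM]
  have hIH : Complex.I • (1 : Matrix (Fin m) (Fin m) ℂ) - H
      = (V : Matrix (Fin m) (Fin m) ℂ) * (Complex.I • 1 - Λ) * star (V : Matrix (Fin m) (Fin m) ℂ) := by
    rw [Matrix.mul_sub, Matrix.sub_mul, hsmul1 _ hVmem, ← hspec]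
  have hIHp : Complex.I • (1 : Matrix (Fin m) (Fin m) ℂ) + H
      = (V : Matrix (Fin m) (Fin m) ℂ) * (Complex.I • 1 + Λ) * star (V : Matrix (Fin m) (Fin m) ℂ) := by
    rw [Matrix.mul_add, Matrix.add_mul, hsmul1 _ hVmem, ← hspec]
  have hsand : ∀ A B : Matrix (Fin m) (Fin m) ℂ,
      ((V : Matrix (Fin m) (Fin m) ℂ) * A * star (V : Matrix (Fin m) (Fin m) ℂ)) *
        ((V : Matrix (Fin m) (Fin m) ℂ) * B * star (V : Matrix (Fin m) (Fin m) ℂ))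
      = (V : Matrix (Fin m) (Fin m) ℂ) * (A * B) * star (V : Matrix (Fin m) (Fin m) ℂ) := by
    intro A B
    simp only [mul_assoc]
    rw [show star (V : Matrix (Fin m) (Fin m) ℂ) * ((V : Matrix (Fin m) (Fin m) ℂ) * (B * star (V : Matrix (Fin m) (Fin m) ℂ)))
        = (star (V : Matrix (Fin m) (Fin m) ℂ) * (V : Matrix (Fin m) (Fin m) ℂ)) * (B * star (V : Matrix (Fin m) (Fin m) ℂ)) from by
      simp only [mul_assoc], hVsV, one_mul]
  have hC : (Complex.I • 1 - H) *
      ((V : Matrix (Fin m) (Fin m) ℂ) * Matrix.diagonal d0 * star (V : Matrix (Fin m) (Fin m) ℂ))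
      = Complex.I • (1 : Matrix (Fin m) (Fin m) ℂ) + H := by
    rw [hIH, hsand, hdiag, ← hIHp]
  have hVdet : IsUnit (V : Matrix (Fin m) (Fin m) ℂ).det := by
    apply IsUnit.of_mul_eq_one (star (V : Matrix (Fin m) (Fin m) ℂ)).det
    rw [← Matrix.det_mul, hVVs, Matrix.det_one]
  have hVdet' : IsUnit (star (V : Matrix (Fin m) (Fin m) ℂ)).det := by
    apply IsUnit.of_mul_eq_one (V : Matrix (Fin m) (Fin m) ℂ).det
    rw [← Matrix.det_mul, hVsV, Matrix.det_one]
  have hunit : IsUnit (Complex.I • (1 : Matrix (Fin m) (Fin m) ℂ) - H) := by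
    rw [Matrix.isUnit_iff_isUnit_det, hIH, Matrix.det_mul, Matrix.det_mul]
    refine (hVdet.mul ?_).mul hVdet'
    rw [hΛdiag, Matrix.det_diagonal]
    exact isUnit_iff_ne_zero.mpr (Finset.prod_ne_zero_iff.mpr fun k _ => hne k)
  have hu_eq : u = (V : Matrix (Fin m) (Fin m) ℂ) * Matrix.diagonal d0 * star (V : Matrix (Fin m) (Fin m) ℂ) :=
    hunit.mul_left_cancel (hB.trans hC.symm)
  have hc_eq : c = μ⁻¹ • u := by
    rw [hu, smul_smul, inv_mul_cancel₀ hμ0, one_smul]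
  refine ⟨V, hVmem, fun k => μ⁻¹ * d0 k, ?_⟩
  rw [hc_eq, hu_eq,
    show (Matrix.diagonal fun k => μ⁻¹ * d0 k) = μ⁻¹ • Matrix.diagonal d0 from by
      rw [← Matrix.diagonal_smul]; rfl,
    Matrix.mul_smul, Matrix.smul_mul]



lemma diag_commutator {k : ℕ} (d : Fin (k+1) → ℂ) (hd : ∀ i, star (d i) * d i = 1)
    (hprod : ∏ i, d i = 1) :
    ∃ P E : Matrix (Fin (k+1)) (Fin (k+1)) ℂ,
      P ∈ Matrix.unitaryGroup (Fin (k+1)) ℂ ∧ E ∈ Matrix.unitaryGroup (Fin (k+1)) ℂ ∧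
      P * E * star P * star E = Matrix.diagonal d := by
  classical
  set τ : Equiv.Perm (Fin (k+1)) := finRotate (k+1) with hτ
  set e : Fin (k+1) → ℂ := fun j => ∏ x ∈ Finset.Iio j, d x with he
  have hIio0 : Finset.Iio (0 : Fin (k+1)) = ∅ := by
    ext x; simp
  have hIic_last : Finset.Iic (Fin.last k) = Finset.univ := by
    ext x; simp [Fin.le_last]
  have hCcond : ∀ i, e (τ i) = d i * e i := by
    intro i
    rw [hτ, finRotate_succ_apply]
    rcases eq_or_ne i (Fin.last k) with rfl | hne
    · rw [show Fin.last k + 1 = 0 from by simp, he]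
      simp only [hIio0, Finset.prod_empty]
      rw [← hprod, ← hIic_last, ← Finset.Iio_insert,
        Finset.prod_insert (fun h => absurd (Finset.mem_Iio.mp h) (lt_irrefl _))]
    · have hIio : Finset.Iio (i + 1) = Finset.Iic i := by
        ext x
        simp only [Finset.mem_Iio, Finset.mem_Iic, Fin.lt_def, Fin.le_def]
        rw [Fin.val_add_one, if_neg hne, Nat.lt_succ_iff]
      rw [he]
      simp only [hIio]
      rw [← Finset.Iio_insert, Finset.prod_insert (fun h => absurd (Finset.mem_Iio.mp h) (lt_irrefl _))]
  have he_unit : ∀ j, star (e j) * e j = 1 := by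
    intro j
    rw [he]
    simp only [show (star : ℂ → ℂ) = (starRingEnd ℂ) from rfl]
    rw [map_prod, ← Finset.prod_mul_distrib]
    exact Finset.prod_eq_one fun x _ => hd x
  set P : Matrix (Fin (k+1)) (Fin (k+1)) ℂ :=
    Matrix.of fun i j => if j = τ i then (1:ℂ) else 0 with hP
  have hstarP : star P = Matrix.of fun i j => if i = τ j then (1:ℂ) else 0 := by
    ext i j
    simp [hP, Matrix.star_apply, apply_ite (star : ℂ → ℂ)]
  have hPPs : P * star P = 1 := by
    ext i j
    simp only [hstarP, hP, Matrix.mul_apply, Matrix.of_apply, ite_mul, one_mul, zero_mul,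
      Finset.sum_ite_eq', Finset.mem_univ, if_true, Matrix.one_apply]
    by_cases h : i = j <;> simp [h, EmbeddingLike.apply_eq_iff_eq]
  have hsPP : star P * P = 1 := by
    ext i j
    have h1 : (star P * P) i j
        = ∑ x, (if i = τ x then (1:ℂ) else 0) * (if j = τ x then 1 else 0) := by
      simp [hstarP, hP, Matrix.mul_apply]
    rw [h1, Equiv.sum_comp τ (fun x => (if i = x then (1:ℂ) else 0) * (if j = x then 1 else 0)),
      Matrix.one_apply]
    simp [Finset.sum_ite_eq, eq_comm]
  have hstep1 : P * Matrix.diagonal e = Matrix.of (fun i j => Matrix.diagonal e (τ i) j) := by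
    ext i j
    simp [hP, Matrix.mul_apply]
  have hstep2 : ∀ N : Matrix (Fin (k+1)) (Fin (k+1)) ℂ,
      N * star P = Matrix.of (fun i j => N i (τ j)) := by
    intro N
    ext i j
    simp [hstarP, Matrix.mul_apply]
  have hPEP : P * Matrix.diagonal e * star P = Matrix.diagonal (fun i => e (τ i)) := by
    rw [hstep1, hstep2]
    ext i j
    rcases eq_or_ne i j with rfl | hij
    · simp [Matrix.diagonal_apply]
    · simp [Matrix.diagonal_apply, hij, (EmbeddingLike.apply_eq_iff_eq τ).ne.mpr hij]
  have hstarE : star (Matrix.diagonal e) = Matrix.diagonal (fun i => star (e i)) := by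
    rw [Matrix.star_eq_conjTranspose, Matrix.diagonal_conjTranspose]
    rfl
  have hfinal : P * Matrix.diagonal e * star P * star (Matrix.diagonal e)
      = Matrix.diagonal d := by
    rw [hPEP, hstarE, Matrix.diagonal_mul_diagonal]
    refine congrArg _ (funext fun i => ?_)
    rw [hCcond i, mul_assoc, mul_comm (e i), he_unit i, mul_one]
  refine ⟨P, Matrix.diagonal e, Matrix.mem_unitaryGroup_iff.mpr hPPs, ?_, hfinal⟩
  refine Matrix.mem_unitaryGroup_iff'.mpr ?_
  rw [hstarE, Matrix.diagonal_mul_diagonal]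
  have : (fun i => star (e i) * e i) = fun _ => (1:ℂ) := funext fun i => he_unit i
  rw [this, Matrix.diagonal_one]

lemma sandwich {m : ℕ} (V A B : Matrix (Fin m) (Fin m) ℂ) (hVsV : star V * V = 1) :
    (V * A * star V) * (V * B * star V) = V * (A * B) * star V := by
  calc (V*A*star V)*(V*B*star V) = V*(A*((star V*V)*B))*star V := by noncomm_ring
    _ = V*(A*B)*star V := by rw [hVsV, one_mul]

lemma scale_to_SU {m : ℕ} (hm : 1 ≤ m) (A : Matrix (Fin m) (Fin m) ℂ)
    (hA : A ∈ Matrix.unitaryGroup (Fin m) ℂ) :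
    ∃ α : ℂ, star α * α = 1 ∧ (α • A) ∈ Matrix.specialUnitaryGroup (Fin m) ℂ := by
  have hdet : star A.det * A.det = 1 := by
    rw [← Matrix.det_conjTranspose, ← Matrix.det_mul, ← Matrix.star_eq_conjTranspose,
      Matrix.mem_unitaryGroup_iff'.mp hA, Matrix.det_one]
  have hdet0 : A.det ≠ 0 := by
    intro h; rw [h, mul_zero] at hdet; exact zero_ne_one hdet
  obtain ⟨α, hα⟩ := IsAlgClosed.exists_pow_nat_eq (A.det)⁻¹ (n := m) (by omega)
  have hdnorm : ‖A.det‖ = 1 := by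
    have h1 : Complex.normSq A.det = 1 := by
      have := hdet
      rw [show star A.det = (starRingEnd ℂ) A.det from rfl, mul_comm, Complex.mul_conj] at this
      exact_mod_cast this
    have h2 : ‖A.det‖^2 = 1 := by
      rw [Complex.sq_norm]; exact h1
    nlinarith [norm_nonneg A.det]
  have hαnorm : ‖α‖ = 1 := by
    have h1 : ‖α‖ ^ m = 1 := by
      rw [← norm_pow, hα, norm_inv, hdnorm, inv_one]
    rcases (pow_eq_one_iff_cases.mp h1) with h | h | h
    · omega
    · exact h
    · nlinarith [norm_nonneg α, h.1]
  have hαs : star α * α = 1 := by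
    rw [show star α = (starRingEnd ℂ) α from rfl, mul_comm, Complex.mul_conj]
    norm_cast
    simp [Complex.normSq_eq_norm_sq, hαnorm]
  refine ⟨α, hαs, Matrix.mem_specialUnitaryGroup_iff.mpr ⟨?_, ?_⟩⟩
  · refine Matrix.mem_unitaryGroup_iff'.mpr ?_
    rw [star_smul, Matrix.smul_mul, Matrix.mul_smul, smul_smul, hαs,
      Matrix.mem_unitaryGroup_iff'.mp hA, one_smul]
  · rw [Matrix.det_smul, Fintype.card_fin, hα, inv_mul_cancel₀ hdet0]

/-- The special unitary group `SU(m)` is a group: the inverse of `A` is `star A`. -/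
instance SUgroup (m : ℕ) : Group (specialUnitaryGroup (Fin m) ℂ) :=
  { (inferInstance : Monoid (specialUnitaryGroup (Fin m) ℂ)) with
    inv := fun A => ⟨star A.1, by
      rcases Submonoid.mem_inf.mp A.2 with ⟨h1, h2⟩
      refine Submonoid.mem_inf.mpr ⟨Unitary.star_mem h1, ?_⟩
      rw [MonoidHom.mem_mker] at h2 ⊢
      show (star A.1).det = 1
      rw [Matrix.star_eq_conjTranspose, Matrix.det_conjTranspose]
      rw [show A.1.det = 1 from h2, star_one]⟩
    inv_mul_cancel := fun A => by
      rcases Submonoid.mem_inf.mp A.2 with ⟨h1, -⟩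
      exact Subtype.ext (Matrix.mem_unitaryGroup_iff'.mp h1) }

theorem toyama_goto_commutator_surjective_on_SU
    (m : ℕ) (hm : 1 ≤ m) (c : specialUnitaryGroup (Fin m) ℂ) :
    ∃ x y : specialUnitaryGroup (Fin m) ℂ, c = x * y * x⁻¹ * y⁻¹ := by
  obtain ⟨hcu, hcdet⟩ := Matrix.mem_specialUnitaryGroup_iff.mp c.2
  obtain ⟨V, hV, d, hceq⟩ := unitary_diagonalizable c.1 hcu
  have hVsV : star V * V = 1 := Matrix.mem_unitaryGroup_iff'.mp hV
  have hVVs : V * star V = 1 := Matrix.mem_unitaryGroup_iff.mp hV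
  have hD_eq : Matrix.diagonal d = star V * c.1 * V := by
    rw [hceq, show star V * (V * Matrix.diagonal d * star V) * V
        = (star V * V) * Matrix.diagonal d * (star V * V) from by noncomm_ring, hVsV,
      one_mul, mul_one]
  have hDu : Matrix.diagonal d ∈ Matrix.unitaryGroup (Fin m) ℂ := by
    rw [hD_eq]
    exact mul_mem (mul_mem (Unitary.star_mem hV) hcu) hV
  have hstarD : star (Matrix.diagonal d) = Matrix.diagonal (fun i => star (d i)) := by
    rw [Matrix.star_eq_conjTranspose, Matrix.diagonal_conjTranspose]
    rfl
  have hdstar : ∀ i, star (d i) * d i = 1 := by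
    intro i
    have h := Matrix.mem_unitaryGroup_iff'.mp hDu
    rw [hstarD, Matrix.diagonal_mul_diagonal] at h
    have := congrFun (congrFun h i) i
    simpa [Matrix.diagonal_apply_eq, Matrix.one_apply] using this
  have hdprod : ∏ i, d i = 1 := by
    have h : (Matrix.diagonal d).det = 1 := by
      rw [hD_eq, Matrix.det_mul, Matrix.det_mul, hcdet, mul_one, ← Matrix.det_mul, hVsV,
        Matrix.det_one]
    rwa [Matrix.det_diagonal] at h
  obtain ⟨k, rfl⟩ : ∃ k, m = k + 1 := ⟨m - 1, by omega⟩
  obtain ⟨P, E, hPu, hEu, hPE⟩ := diag_commutator d hdstar hdprod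
  set X : Matrix (Fin (k+1)) (Fin (k+1)) ℂ := V * P * star V with hX_def
  set Y : Matrix (Fin (k+1)) (Fin (k+1)) ℂ := V * E * star V with hY_def
  have hXu : X ∈ Matrix.unitaryGroup (Fin (k+1)) ℂ :=
    mul_mem (mul_mem hV hPu) (Unitary.star_mem hV)
  have hYu : Y ∈ Matrix.unitaryGroup (Fin (k+1)) ℂ :=
    mul_mem (mul_mem hV hEu) (Unitary.star_mem hV)
  have hsX : star X = V * star P * star V := by
    rw [hX_def]
    simp only [Matrix.star_mul, star_star]
    noncomm_ring
  have hsY : star Y = V * star E * star V := by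
    rw [hY_def]
    simp only [Matrix.star_mul, star_star]
    noncomm_ring
  have hXYc : X * Y * star X * star Y = c.1 := by
    rw [hsX, hsY, hX_def, hY_def, sandwich _ _ _ hVsV, sandwich _ _ _ hVsV,
      sandwich _ _ _ hVsV, hPE, ← hceq]
  obtain ⟨α, hαs, hXSU⟩ := scale_to_SU (by omega) X hXu
  obtain ⟨β, hβs, hYSU⟩ := scale_to_SU (by omega) Y hYu
  refine ⟨⟨α • X, hXSU⟩, ⟨β • Y, hYSU⟩, ?_⟩
  refine Subtype.ext ?_
  show c.1 = (α • X) * (β • Y) * star (α • X) * star (β • Y)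
  have hkey2 : (α • X) * (β • Y) * star (α • X) * star (β • Y)
      = (α * β * star α * star β) • (X * Y * star X * star Y) := by
    simp only [star_smul, Matrix.smul_mul, Matrix.mul_smul, smul_smul]
    congr 1
    ring
  rw [hkey2, show α * β * star α * star β = (star α * α) * (star β * β) from by ring, hαs, hβs,
    one_mul, one_smul, hXYc]
end

section
/- (Thom) Let m ≥ 2. For every neighborhood U of the identity in the special unitary group SU(m) (with its topology as a subset of the m×m complex matrices), there exists a nontrivial word w in the free group F₂ on two generators such that every value of the word map of w on SU(m) lies in U. In particular, there exist nontrivial words whose word map on SU(m) is not surjective and has non-dense image. -/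
open Matrix

namespace ThomAux

open scoped commutatorElement

abbrev Ltr := (Fin 2) × Bool

def inv1 (a : Ltr) : Ltr := (a.1, !a.2)

@[simp] lemma inv1_inv1 (a : Ltr) : inv1 (inv1 a) = a := by simp [inv1]

lemma inv1_inj {a b : Ltr} (h : inv1 a = inv1 b) : a = b := by
  have := congrArg inv1 h; simpa using this

def Rl (a b : Ltr) : Prop := b ≠ inv1 a

/-- `L` is a nonempty reduced word with first letter `S` and last letter `E`. -/
def RW (L : List Ltr) (S E : Ltr) : Prop :=
  L.head? = some S ∧ L.getLast? = some E ∧ List.Chain' Rl L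

lemma RW.ne_nil {L : List Ltr} {S E : Ltr} (h : RW L S E) : L ≠ [] := by
  rintro rfl; simpa using h.1

lemma head?_invRev (L : List Ltr) :
    (FreeGroup.invRev L).head? = L.getLast?.map inv1 := by
  rw [FreeGroup.invRev, List.head?_reverse]
  induction L using List.reverseRecOn with
  | nil => simp
  | append_singleton L a ih => simp [inv1]

lemma getLast?_invRev (L : List Ltr) :
    (FreeGroup.invRev L).getLast? = L.head?.map inv1 := by
  simp [FreeGroup.invRev]
  cases L <;> simp [inv1]

lemma chain'_invRev {L : List Ltr} (h : List.Chain' Rl L) :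
    List.Chain' Rl (FreeGroup.invRev L) := by
  unfold List.Chain' at *
  rw [FreeGroup.invRev, List.isChain_reverse, List.isChain_map]
  refine h.imp ?_
  intro a b hab
  simp only [flip, Rl, inv1] at *
  intro hc
  apply hab
  rw [Prod.ext_iff] at hc ⊢
  obtain ⟨h1, h2⟩ := hc
  refine ⟨h1.symm, ?_⟩
  rw [h2]; simp

lemma RW.invRev {L : List Ltr} {S E : Ltr} (h : RW L S E) :
    RW (FreeGroup.invRev L) (inv1 E) (inv1 S) := by
  obtain ⟨h1, h2, h3⟩ := h
  exact ⟨by rw [head?_invRev, h2]; rfl, by rw [getLast?_invRev, h1]; rfl, chain'_invRev h3⟩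

lemma RW.append {L1 L2 : List Ltr} {S1 E1 S2 E2 : Ltr}
    (h1 : RW L1 S1 E1) (h2 : RW L2 S2 E2) (hj : S2 ≠ inv1 E1) :
    RW (L1 ++ L2) S1 E2 := by
  obtain ⟨a1, b1, c1⟩ := h1
  obtain ⟨a2, b2, c2⟩ := h2
  refine ⟨?_, ?_, ?_⟩
  · rw [List.head?_append_of_ne_nil _ (by rintro rfl; simp at a1)]; exact a1
  · rw [List.getLast?_append_of_ne_nil _ (by rintro rfl; simp at a2)]; exact b2
  · rw [List.Chain', List.isChain_append]
    refine ⟨c1, c2, ?_⟩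
    intro x hx y hy
    rw [b1] at hx; rw [a2] at hy
    cases hx; cases hy
    exact hj

/-- If a word is reduced (in the `Chain' Rl` sense) then `FreeGroup.reduce` fixes it. -/
lemma reduce_eq_self {L : List Ltr} (h : List.Chain' Rl L) : FreeGroup.reduce L = L := by
  induction L with
  | nil => rfl
  | cons a L ih =>
    rw [FreeGroup.reduce.cons, ih h.tail]
    cases L with
    | nil => rfl
    | cons b t =>
      have hab : Rl a b := List.isChain_cons_cons.mp h |>.1
      have : ¬(a.1 = b.1 ∧ a.2 = !b.2) := by
        rintro ⟨h1, h2⟩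
        exact hab (by simp [inv1, Prod.ext_iff, h1.symm, h2])
      simp [this]

lemma mk_ne_one {L : List Ltr} {S E : Ltr} (h : RW L S E) : FreeGroup.mk L ≠ 1 := by
  intro hc
  have h1 : (FreeGroup.mk L).toWord = L := by rw [FreeGroup.toWord_mk, reduce_eq_self h.2.2]
  rw [hc, FreeGroup.toWord_one] at h1
  rcases h with ⟨hh, -, -⟩
  rw [← h1] at hh
  simp at hh

def comboL (s c v : List Ltr) : List Ltr :=
  s ++ c ++ v ++ FreeGroup.invRev c ++ FreeGroup.invRev s ++ c ++ FreeGroup.invRev v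
    ++ FreeGroup.invRev c

/-- The key combination lemma: under suitable non-cancellation conditions on the
boundary letters, `comboL s c v` is again reduced. -/
lemma RW.combo {s c v : List Ltr} {S E Sv Ev c1 c2 : Ltr}
    (hs : RW s S E) (hc : RW c c1 c2) (hv : RW v Sv Ev)
    (g1 : c1 ≠ inv1 E) (g2 : c1 ≠ S) (g3 : Sv ≠ inv1 c2) (g4 : c2 ≠ Ev) :
    RW (comboL s c v) S (inv1 c1) := by
  unfold comboL
  have j3 : inv1 c2 ≠ inv1 Ev := fun hh => g4 (inv1_inj hh)
  have j4 : inv1 E ≠ inv1 (inv1 c1) := by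
    simp only [inv1_inv1]; intro hh; exact g1 (by rw [hh])
  have j5 : c1 ≠ inv1 (inv1 S) := by simpa using g2
  have j6 : inv1 Ev ≠ inv1 c2 := fun hh => g4 (inv1_inj hh).symm
  have j7 : inv1 c2 ≠ inv1 (inv1 Sv) := by simpa using fun hh => g3 hh.symm
  exact ((((((hs.append hc g1).append hv g3).append hc.invRev j3).append
    hs.invRev j4).append hc j5).append hv.invRev j6).append hc.invRev j7

-- ===== the words =====
def X : FreeGroup (Fin 2) := FreeGroup.of 0
def Y : FreeGroup (Fin 2) := FreeGroup.of 1

def cnj (t : ℕ) : FreeGroup (Fin 2) :=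
  if t = 0 then Y * Y else if t % 2 = 1 then Y⁻¹ * X else Y * X

def sw (k : ℕ) : ℕ → FreeGroup (Fin 2)
  | 0 => X ^ k
  | t + 1 => ⁅sw k t, cnj t * sw k t * (cnj t)⁻¹⁆

def bld (N T : ℕ) : ℕ → FreeGroup (Fin 2)
  | 0 => sw N (T + 1)
  | i + 1 => ⁅sw (N - (i + 1)) T, Y⁻¹ * bld N T i * Y⁆

def cnjL (t : ℕ) : List Ltr :=
  if t = 0 then [(1, true), (1, true)]
  else if t % 2 = 1 then [(1, false), (0, true)] else [(1, true), (0, true)]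

def swL (k : ℕ) : ℕ → List Ltr
  | 0 => List.replicate k (0, true)
  | t + 1 => comboL (swL k t) (cnjL t) (swL k t)

def bldL (N T : ℕ) : ℕ → List Ltr
  | 0 => swL N (T + 1)
  | i + 1 => comboL (swL (N - (i + 1)) T) [(1, false)] (bldL N T i)

-- ===== mk equalities =====
lemma mk_single_t (a : Fin 2) : FreeGroup.mk [(a, true)] = FreeGroup.of a := rfl

lemma mk_single_f (a : Fin 2) : FreeGroup.mk [(a, false)] = (FreeGroup.of a)⁻¹ := by
  rw [show [(a, false)] = FreeGroup.invRev [(a, true)] from rfl, ← FreeGroup.inv_mk, mk_single_t]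


lemma mk_comboL (s c v : List Ltr) :
    FreeGroup.mk (comboL s c v) =
      ⁅FreeGroup.mk s, FreeGroup.mk c * FreeGroup.mk v * (FreeGroup.mk c)⁻¹⁆ := by
  simp only [comboL, ← FreeGroup.mul_mk, ← FreeGroup.inv_mk, commutatorElement_def]
  group

lemma mk_replicate (k : ℕ) : FreeGroup.mk (List.replicate k ((0 : Fin 2), true)) = X ^ k := by
  induction k with
  | zero => simp [FreeGroup.one_eq_mk]
  | succ k ih => rw [List.replicate_succ, ← List.singleton_append, ← FreeGroup.mul_mk,
      mk_single_t, ih, pow_succ']; rfl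

lemma mk_cnjL (t : ℕ) : FreeGroup.mk (cnjL t) = cnj t := by
  unfold cnjL cnj
  split_ifs with h1 h2
  · rw [show [((1:Fin 2), true), ((1:Fin 2), true)] = [((1:Fin 2), true)] ++ [((1:Fin 2), true)] from rfl,
      ← FreeGroup.mul_mk, mk_single_t]; rfl
  · rw [show [((1:Fin 2), false), ((0:Fin 2), true)] = [((1:Fin 2), false)] ++ [((0:Fin 2), true)] from rfl,
      ← FreeGroup.mul_mk, mk_single_t, mk_single_f]; rfl
  · rw [show [((1:Fin 2), true), ((0:Fin 2), true)] = [((1:Fin 2), true)] ++ [((0:Fin 2), true)] from rfl,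
      ← FreeGroup.mul_mk, mk_single_t]; rfl

lemma mk_swL (k t : ℕ) : FreeGroup.mk (swL k t) = sw k t := by
  induction t with
  | zero => exact mk_replicate k
  | succ t ih => rw [swL, sw, mk_comboL, ih, mk_cnjL]

lemma mk_bldL (N T : ℕ) (i : ℕ) : FreeGroup.mk (bldL N T i) = bld N T i := by
  induction i with
  | zero => exact mk_swL _ _
  | succ i ih =>
    rw [bldL, bld, mk_comboL, ih, mk_swL]
    rw [mk_single_f]; rfl

-- ===== reducedness invariants =====
lemma RW_single (a : Ltr) : RW [a] a a := ⟨rfl, rfl, List.isChain_singleton a⟩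

lemma RW_pair {a b : Ltr} (h : b ≠ inv1 a) : RW [a, b] a b :=
  ⟨rfl, rfl, List.isChain_cons_cons.mpr ⟨h, List.isChain_singleton b⟩⟩

lemma RW_replicate (k : ℕ) (hk : 1 ≤ k) (a : Ltr) : RW (List.replicate k a) a a := by
  induction k with
  | zero => omega
  | succ k ih =>
    rcases Nat.eq_zero_or_pos k with rfl | hk'
    · exact RW_single a
    · obtain ⟨h1, h2, h3⟩ := ih hk'
      refine ⟨?_, ?_, ?_⟩
      · rw [List.replicate_succ]; rfl
      · rw [List.replicate_succ, List.getLast?_cons, h2]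
        cases k with
        | zero => omega
        | succ k => simp_all
      · rw [List.replicate_succ]
        cases k with
        | zero => exact List.isChain_singleton a
        | succ k =>
          rw [List.replicate_succ, List.Chain', List.isChain_cons_cons]
          rw [List.replicate_succ] at h3
          exact ⟨fun hc => by simp [inv1, Prod.ext_iff] at hc, h3⟩

def endL (t : ℕ) : Ltr :=
  if t = 0 then (0, true) else if t % 2 = 1 then (1, false) else (1, true)

def cnjHd (t : ℕ) : Ltr := if t = 0 then (1, true) else if t % 2 = 1 then (1, false) else (1, true)
def cnjTl (t : ℕ) : Ltr := if t = 0 then (1, true) else (0, true)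

lemma RW_cnjL (t : ℕ) : RW (cnjL t) (cnjHd t) (cnjTl t) := by
  unfold cnjL cnjHd cnjTl
  split_ifs with h1 h2 <;> exact RW_pair (by decide)

lemma RW_swL (k : ℕ) (hk : 1 ≤ k) (t : ℕ) : RW (swL k t) (0, true) (endL t) := by
  induction t with
  | zero => exact RW_replicate k hk _
  | succ t ih =>
    have key := RW.combo ih (RW_cnjL t) ih
    rw [swL]
    have hend : endL (t + 1) = inv1 (cnjHd t) := by
      unfold endL cnjHd inv1
      rcases Nat.even_or_odd t with he | ho
      · have h2 : t % 2 = 0 := Nat.even_iff.mp he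
        have h3 : (t + 1) % 2 = 1 := by omega
        split_ifs <;> simp_all
      · have h2 : t % 2 = 1 := Nat.odd_iff.mp ho
        have h3 : (t + 1) % 2 = 0 := by omega
        have h4 : ¬ t = 0 := by omega
        split_ifs <;> simp_all
    rw [hend]
    refine key ?_ ?_ ?_ ?_ <;>
      · simp only [cnjHd, cnjTl, endL, inv1]
        rcases Nat.even_or_odd t with he | ho
        · have h2 : t % 2 = 0 := Nat.even_iff.mp he
          split_ifs <;> simp_all <;> decide
        · have h2 : t % 2 = 1 := Nat.odd_iff.mp ho
          have h4 : ¬ t = 0 := by omega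
          split_ifs <;> simp_all <;> decide

lemma RW_bldL (N T : ℕ) (hT : T % 2 = 1) :
    ∀ i, i + 1 ≤ N → RW (bldL N T i) (0, true) (1, true) := by
  intro i
  induction i with
  | zero =>
    intro hN
    have h := RW_swL N hN (T + 1)
    have : endL (T + 1) = (1, true) := by
      unfold endL; have h1 : ¬ T + 1 = 0 := by omega
      have h2 : (T + 1) % 2 = 0 := by omega
      split_ifs <;> simp_all
    rwa [this] at h
  | succ i ih =>
    intro hN
    have hk : 1 ≤ N - (i + 1) := by omega
    have hsw := RW_swL (N - (i + 1)) hk T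
    have hendT : endL T = (1, false) := by
      unfold endL; have : ¬ T = 0 := by omega
      split_ifs <;> simp_all
    rw [hendT] at hsw
    have hbl := ih (by omega)
    have key := RW.combo hsw (RW_single ((1 : Fin 2), false)) hbl
      (by decide) (by decide) (by decide) (by decide)
    rw [bldL]
    exact key

/-- The entrywise ℓ¹ norm of a matrix. -/
noncomputable def N1 (A : Matrix (Fin m) (Fin m) ℂ) : ℝ := ∑ i, ∑ j, ‖A i j‖

lemma N1_nonneg (A : Matrix (Fin m) (Fin m) ℂ) : 0 ≤ N1 A := by
  refine Finset.sum_nonneg fun i _ => Finset.sum_nonneg fun j _ => ?_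
  positivity

lemma entry_le_N1 (A : Matrix (Fin m) (Fin m) ℂ) (i j : Fin m) :
    ‖A i j‖ ≤ N1 A := by
  have h1 : ‖A i j‖ ≤ ∑ j', ‖A i j'‖ :=
    Finset.single_le_sum (f := fun j' => ‖A i j'‖) (fun j' _ => by positivity)
      (Finset.mem_univ j)
  refine h1.trans (Finset.single_le_sum (f := fun i' => ∑ j', ‖A i' j'‖)
    (fun i' _ => ?_) (Finset.mem_univ i))
  exact Finset.sum_nonneg fun j' _ => by positivity

lemma N1_add_le (A B : Matrix (Fin m) (Fin m) ℂ) : N1 (A + B) ≤ N1 A + N1 B := by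
  unfold N1
  rw [← Finset.sum_add_distrib]
  refine Finset.sum_le_sum fun i _ => ?_
  rw [← Finset.sum_add_distrib]
  refine Finset.sum_le_sum fun j _ => ?_
  exact (norm_add_le _ _)

lemma N1_sub_le (A B : Matrix (Fin m) (Fin m) ℂ) : N1 (A - B) ≤ N1 A + N1 B := by
  have := N1_add_le A (-B)
  simpa [N1, sub_eq_add_neg] using this

lemma N1_mul_le (A B : Matrix (Fin m) (Fin m) ℂ) : N1 (A * B) ≤ N1 A * N1 B := by
  unfold N1
  calc ∑ i, ∑ j, ‖(A * B) i j‖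
      ≤ ∑ i, ∑ j, ∑ k, ‖A i k‖ * ‖B k j‖ := by
        refine Finset.sum_le_sum fun i _ => Finset.sum_le_sum fun j _ => ?_
        rw [Matrix.mul_apply]
        refine (norm_sum_le _ _).trans ?_
        refine Finset.sum_le_sum fun k _ => ?_
        exact le_of_eq (norm_mul _ _)
    _ = ∑ i, ∑ k, ‖A i k‖ * ∑ j, ‖B k j‖ := by
        refine Finset.sum_congr rfl fun i _ => ?_
        rw [Finset.sum_comm]
        refine Finset.sum_congr rfl fun k _ => ?_
        rw [Finset.mul_sum]
    _ ≤ ∑ i, ∑ k, ‖A i k‖ * (∑ k', ∑ j, ‖B k' j‖) := by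
        refine Finset.sum_le_sum fun i _ => Finset.sum_le_sum fun k _ => ?_
        refine mul_le_mul_of_nonneg_left ?_ (by positivity)
        refine Finset.single_le_sum (f := fun k' => ∑ j, ‖B k' j‖)
          (fun k' _ => ?_) (Finset.mem_univ k)
        exact Finset.sum_nonneg fun j _ => by positivity
    _ = (∑ i, ∑ k, ‖A i k‖) * (∑ k', ∑ j, ‖B k' j‖) := by
        rw [Finset.sum_mul]
        refine Finset.sum_congr rfl fun i _ => ?_
        rw [Finset.sum_mul]

lemma N1_one_le : N1 (1 : Matrix (Fin m) (Fin m) ℂ) ≤ (m : ℝ) := by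
  unfold N1
  have : ∀ i : Fin m, ∑ j, ‖(1 : Matrix (Fin m) (Fin m) ℂ) i j‖ = 1 := by
    intro i
    rw [Finset.sum_eq_single i]
    · simp [Matrix.one_apply]
    · intro b _ hb; simp [Matrix.one_apply, Ne.symm hb]
    · intro h; exact absurd (Finset.mem_univ i) h
  rw [Finset.sum_congr rfl fun i _ => this i]
  simp

lemma entries_le_one {A : Matrix (Fin m) (Fin m) ℂ} (hA : A ∈ unitaryGroup (Fin m) ℂ)
    (i j : Fin m) : ‖A i j‖ ≤ 1 := by
  have h : star A * A = 1 := (Matrix.mem_unitaryGroup_iff').mp hA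
  have h2 := congrArg (fun M => M j j) h
  simp only [Matrix.mul_apply, Matrix.one_apply_eq] at h2
  have h3 : ∀ k, (star A) j k * A k j = (Complex.normSq (A k j) : ℂ) := by
    intro k
    rw [Matrix.star_apply, Complex.star_def, ← Complex.normSq_eq_conj_mul_self]
  rw [Finset.sum_congr rfl fun k _ => h3 k] at h2
  have h4 : (∑ k, Complex.normSq (A k j)) = 1 := by
    have := congrArg Complex.re h2
    simpa using this
  have h5 : Complex.normSq (A i j) ≤ 1 := by
    rw [← h4]
    exact Finset.single_le_sum (f := fun k => Complex.normSq (A k j))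
      (fun k _ => Complex.normSq_nonneg _) (Finset.mem_univ i)
  have h6 : ‖A i j‖ ^ 2 ≤ 1 := by rwa [Complex.sq_norm]
  nlinarith [norm_nonneg (A i j)]

lemma N1_le_of_unitary {A : Matrix (Fin m) (Fin m) ℂ} (hA : A ∈ unitaryGroup (Fin m) ℂ) :
    N1 A ≤ (m : ℝ) ^ 2 := by
  unfold N1
  calc ∑ i, ∑ j, ‖A i j‖ ≤ ∑ _i : Fin m, ∑ _j : Fin m, (1 : ℝ) :=
        Finset.sum_le_sum fun i _ => Finset.sum_le_sum fun j _ => entries_le_one hA i j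
    _ = (m : ℝ) ^ 2 := by simp [sq]


lemma coe_mul' (u v : specialUnitaryGroup (Fin m) ℂ) : (u * v).1 = u.1 * v.1 := rfl

lemma coe_one' : ((1 : specialUnitaryGroup (Fin m) ℂ)).1 = (1 : Matrix (Fin m) (Fin m) ℂ) := rfl

lemma coe_pow' (u : specialUnitaryGroup (Fin m) ℂ) (k : ℕ) : (u ^ k).1 = u.1 ^ k := by
  induction k with
  | zero => simpa using coe_one'
  | succ k ih => rw [pow_succ, pow_succ, coe_mul', ih]

lemma mem_unitary (u : specialUnitaryGroup (Fin m) ℂ) : u.1 ∈ unitaryGroup (Fin m) ℂ :=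
  (Matrix.mem_specialUnitaryGroup_iff.mp u.2).1

lemma N1_SU_le (u : specialUnitaryGroup (Fin m) ℂ) : N1 u.1 ≤ (m : ℝ) ^ 2 :=
  N1_le_of_unitary (mem_unitary u)

/-- distance to the identity, in the entrywise ℓ¹ norm -/
noncomputable def dd (u : specialUnitaryGroup (Fin m) ℂ) : ℝ := N1 (u.1 - 1)

lemma dd_nonneg (u : specialUnitaryGroup (Fin m) ℂ) : 0 ≤ dd u := N1_nonneg _

lemma dd_le_D (hm : 1 ≤ m) (u : specialUnitaryGroup (Fin m) ℂ) : dd u ≤ 2 * (m : ℝ) ^ 2 := by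
  unfold dd
  refine (N1_sub_le _ _).trans ?_
  have h1 := N1_SU_le u
  have h2 : N1 (1 : Matrix (Fin m) (Fin m) ℂ) ≤ (m : ℝ) := N1_one_le
  have h3 : (m : ℝ) ≤ (m : ℝ) ^ 2 := by
    have : (1 : ℝ) ≤ (m : ℝ) := by exact_mod_cast hm
    nlinarith
  linarith

lemma dd_commutator (u v : specialUnitaryGroup (Fin m) ℂ) :
    dd ⁅u, v⁆ ≤ 2 * dd u * dd v * (m : ℝ) ^ 2 := by
  have hW : (v.1 * u.1) * (u⁻¹ * v⁻¹).1 = 1 := by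
    have h : (v * u) * (u⁻¹ * v⁻¹) = 1 := by group
    rw [← coe_mul', ← coe_mul', h, coe_one']
  have hC : (⁅u, v⁆).1 = (u.1 * v.1) * (u⁻¹ * v⁻¹).1 := by
    have h : ⁅u, v⁆ = (u * v) * (u⁻¹ * v⁻¹) := by group
    rw [h, coe_mul', coe_mul']
  have key : (⁅u, v⁆).1 - 1 = (u.1 * v.1 - v.1 * u.1) * (u⁻¹ * v⁻¹).1 := by
    rw [sub_mul, hW, hC]
  have key2 : u.1 * v.1 - v.1 * u.1 = (u.1 - 1) * (v.1 - 1) - (v.1 - 1) * (u.1 - 1) := by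
    noncomm_ring
  show N1 ((⁅u, v⁆).1 - 1) ≤ 2 * N1 (u.1 - 1) * N1 (v.1 - 1) * (m : ℝ) ^ 2
  rw [key]
  refine (N1_mul_le _ _).trans ?_
  have h1 : N1 (u.1 * v.1 - v.1 * u.1) ≤ 2 * N1 (u.1 - 1) * N1 (v.1 - 1) := by
    rw [key2]
    refine (N1_sub_le _ _).trans ?_
    have ha := N1_mul_le (u.1 - 1) (v.1 - 1)
    have hb := N1_mul_le (v.1 - 1) (u.1 - 1)
    nlinarith [N1_nonneg (u.1 - 1), N1_nonneg (v.1 - 1)]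
  have h2 : N1 ((u⁻¹ * v⁻¹).1) ≤ (m : ℝ) ^ 2 := N1_SU_le _
  have h3 := N1_nonneg (u.1 * v.1 - v.1 * u.1)
  have h4 := N1_nonneg ((u⁻¹ * v⁻¹).1)
  nlinarith [N1_nonneg (u.1 - 1), N1_nonneg (v.1 - 1)]

lemma dd_conj (c u : specialUnitaryGroup (Fin m) ℂ) :
    dd (c * u * c⁻¹) ≤ (m : ℝ) ^ 2 * dd u * (m : ℝ) ^ 2 := by
  have hCi : c.1 * (c⁻¹).1 = 1 := by
    have h : c * c⁻¹ = 1 := by group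
    rw [← coe_mul', h, coe_one']
  have key : (c * u * c⁻¹).1 - 1 = c.1 * (u.1 - 1) * (c⁻¹).1 := by
    rw [coe_mul', coe_mul', mul_sub, sub_mul, mul_one, hCi]
  show N1 ((c * u * c⁻¹).1 - 1) ≤ (m : ℝ) ^ 2 * N1 (u.1 - 1) * (m : ℝ) ^ 2
  rw [key]
  calc N1 (c.1 * (u.1 - 1) * (c⁻¹).1) ≤ N1 (c.1 * (u.1 - 1)) * N1 ((c⁻¹).1) :=
        N1_mul_le _ _
    _ ≤ (N1 c.1 * N1 (u.1 - 1)) * N1 ((c⁻¹).1) := by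
        have := N1_mul_le c.1 (u.1 - 1)
        have := N1_nonneg ((c⁻¹).1)
        nlinarith
    _ ≤ ((m : ℝ) ^ 2 * N1 (u.1 - 1)) * (m : ℝ) ^ 2 := by
        have h3 : N1 c.1 ≤ (m : ℝ) ^ 2 := N1_SU_le _
        have h4 : N1 ((c⁻¹).1) ≤ (m : ℝ) ^ 2 := N1_SU_le _
        have h5 := N1_nonneg (u.1 - 1)
        have h6 := N1_nonneg ((c⁻¹).1)
        have h7 := N1_nonneg c.1
        gcongr <;> assumption
    _ = (m : ℝ) ^ 2 * N1 (u.1 - 1) * (m : ℝ) ^ 2 := by ring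

lemma dd_key (u v c : specialUnitaryGroup (Fin m) ℂ) :
    dd ⁅u, c * v * c⁻¹⁆ ≤ (2 * (m : ℝ) ^ 6) * dd u * dd v := by
  have h1 := dd_commutator u (c * v * c⁻¹)
  have h2 := dd_conj c v
  have h3 := dd_nonneg u
  have h4 := dd_nonneg v
  have h5 := dd_nonneg (c * v * c⁻¹)
  have hm2 : (0 : ℝ) ≤ (m : ℝ) ^ 2 := by positivity
  calc dd ⁅u, c * v * c⁻¹⁆ ≤ 2 * dd u * dd (c * v * c⁻¹) * (m : ℝ) ^ 2 := h1
    _ ≤ 2 * dd u * ((m : ℝ) ^ 2 * dd v * (m : ℝ) ^ 2) * (m : ℝ) ^ 2 := by gcongr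
    _ = (2 * (m : ℝ) ^ 6) * dd u * dd v := by ring


/-- Flattening matrices to vectors indexed by pairs (to use the product metric space). -/
def Φ (f : (Fin m × Fin m) → ℂ) : Matrix (Fin m) (Fin m) ℂ := Matrix.of fun i j => f (i, j)
def ψ (A : Matrix (Fin m) (Fin m) ℂ) : (Fin m × Fin m) → ℂ := fun p => A p.1 p.2

lemma Φψ (A : Matrix (Fin m) (Fin m) ℂ) : Φ (ψ A) = A := rfl

lemma continuous_Φ : Continuous (Φ (m := m)) :=
  continuous_matrix fun i j => continuous_apply (i, j)

def SUset (m : ℕ) : Set (Matrix (Fin m) (Fin m) ℂ) :=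
  {A | A ∈ specialUnitaryGroup (Fin m) ℂ}

lemma isClosed_SUset : IsClosed (SUset m) := by
  have h1 : SUset m = (fun A : Matrix (Fin m) (Fin m) ℂ => star A * A) ⁻¹' {1} ∩
      (fun A : Matrix (Fin m) (Fin m) ℂ => A.det) ⁻¹' {1} := by
    ext A
    simp only [SUset, Set.mem_setOf_eq, Set.mem_inter_iff, Set.mem_preimage,
      Set.mem_singleton_iff, Matrix.mem_specialUnitaryGroup_iff, Matrix.mem_unitaryGroup_iff']
  rw [h1]
  refine IsClosed.inter (IsClosed.preimage ?_ isClosed_singleton)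
    (IsClosed.preimage ?_ isClosed_singleton)
  · exact (continuous_id.matrix_conjTranspose).matrix_mul continuous_id
  · exact continuous_id.matrix_det

def Kflat (m : ℕ) : Set ((Fin m × Fin m) → ℂ) := Φ ⁻¹' (SUset m)

lemma isCompact_Kflat : IsCompact (Kflat m) := by
  have hsub : Kflat m ⊆ Set.pi Set.univ fun _ : Fin m × Fin m => Metric.closedBall (0 : ℂ) 1 := by
    intro f hf
    intro p _
    simp only [Metric.mem_closedBall, Complex.dist_eq, sub_zero]
    have : Φ f ∈ specialUnitaryGroup (Fin m) ℂ := hf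
    have h1 := entries_le_one (Matrix.mem_specialUnitaryGroup_iff.mp this).1 p.1 p.2
    simpa [Φ] using h1
  refine IsCompact.of_isClosed_subset ?_ (isClosed_SUset.preimage continuous_Φ) hsub
  exact isCompact_univ_pi fun _ => isCompact_closedBall 0 1

lemma exists_small_power (g : specialUnitaryGroup (Fin m) ℂ) {ε : ℝ} (hε : 0 < ε) :
    ∃ k, 1 ≤ k ∧ dd (g ^ k) < ε := by
  set x : ℕ → (Fin m × Fin m) → ℂ := fun n => ψ ((g ^ n).1) with hx
  have hmem : ∀ n, x n ∈ Kflat m := by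
    intro n
    show Φ (ψ ((g ^ n).1)) ∈ SUset m
    rw [Φψ]
    exact (g ^ n).2
  obtain ⟨a, -, φs, hmono, hconv⟩ := isCompact_Kflat.tendsto_subseq hmem
  set δ : ℝ := ε / ((m : ℝ) ^ 2 * (m : ℝ) ^ 2 + 1) with hδ
  have hδpos : 0 < δ := by positivity
  obtain ⟨n₀, hn₀⟩ := Metric.tendsto_atTop.mp hconv (δ / 2) (by positivity)
  set i := φs n₀
  set j := φs (n₀ + 1)
  have hij : i < j := hmono (Nat.lt_succ_self n₀)
  have hdist : dist (x j) (x i) < δ := by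
    have h1 := hn₀ n₀ le_rfl
    have h2 := hn₀ (n₀ + 1) (Nat.le_succ n₀)
    calc dist (x j) (x i) ≤ dist (x j) a + dist (x i) a := dist_triangle_right _ _ _
      _ < δ / 2 + δ / 2 := add_lt_add h2 h1
      _ = δ := by ring
  set k := j - i with hk
  refine ⟨k, by omega, ?_⟩
  have hsplit : (g ^ k).1 - 1 = ((g ^ i)⁻¹).1 * ((g ^ j).1 - (g ^ i).1) := by
    have h0 : g ^ i * g ^ k = g ^ j := by rw [← pow_add]; congr 1; omega
    have h1 : (g ^ i)⁻¹ * g ^ j = g ^ k := by rw [← h0]; group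
    have h2 : ((g ^ i)⁻¹ * g ^ i) = 1 := inv_mul_cancel _
    rw [mul_sub, ← coe_mul', ← coe_mul', h1, h2, coe_one']
  have hN1diff : N1 ((g ^ j).1 - (g ^ i).1) ≤ (m : ℝ) ^ 2 * δ := by
    unfold N1
    have hle : ∀ i' j' : Fin m, ‖((g ^ j).1 - (g ^ i).1) i' j'‖ ≤ δ := by
      intro i' j'
      have h1 : ((g ^ j).1 - (g ^ i).1) i' j' = x j (i', j') - x i (i', j') := rfl
      rw [h1, ← Complex.dist_eq]
      exact le_of_lt (lt_of_le_of_lt (dist_le_pi_dist (x j) (x i) (i', j')) hdist)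
    calc ∑ i', ∑ j', ‖((g ^ j).1 - (g ^ i).1) i' j'‖
        ≤ ∑ _i' : Fin m, ∑ _j' : Fin m, δ :=
          Finset.sum_le_sum fun i' _ => Finset.sum_le_sum fun j' _ => hle i' _
      _ = (m : ℝ) ^ 2 * δ := by simp [sq]; ring
  have hfinal : dd (g ^ k) ≤ (m : ℝ) ^ 2 * ((m : ℝ) ^ 2 * δ) := by
    unfold dd
    rw [hsplit]
    refine (N1_mul_le _ _).trans ?_
    have h1 : N1 (((g ^ i)⁻¹).1) ≤ (m : ℝ) ^ 2 := N1_SU_le _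
    have h2 := N1_nonneg ((g ^ j).1 - (g ^ i).1)
    have h3 := N1_nonneg (((g ^ i)⁻¹).1)
    nlinarith
  have : (m : ℝ) ^ 2 * ((m : ℝ) ^ 2 * δ) < ε := by
    have hpos : (0 : ℝ) < (m : ℝ) ^ 2 * (m : ℝ) ^ 2 + 1 := by positivity
    have hδD : δ * ((m : ℝ) ^ 2 * (m : ℝ) ^ 2 + 1) = ε := by
      rw [hδ]; field_simp
    nlinarith [hδpos]
  linarith

lemma exists_N {ε : ℝ} (hε : 0 < ε) :
    ∃ N, 1 ≤ N ∧ ∀ g : specialUnitaryGroup (Fin m) ℂ,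
      ∃ k, 1 ≤ k ∧ k ≤ N ∧ dd (g ^ k) < ε := by
  set O : ℕ → Set ((Fin m × Fin m) → ℂ) :=
    fun j => {f | N1 ((Φ f) ^ (j + 1) - 1) < ε} with hO
  have hopen : ∀ j, IsOpen (O j) := by
    intro j
    have hcont : Continuous fun f : (Fin m × Fin m) → ℂ => N1 ((Φ f) ^ (j + 1) - 1) := by
      unfold N1
      refine continuous_finset_sum _ fun i _ => continuous_finset_sum _ fun l _ => ?_
      refine continuous_norm.comp ?_
      have h1 : Continuous fun f : (Fin m × Fin m) → ℂ => (Φ f) ^ (j + 1) - 1 :=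
        ((continuous_Φ.pow (j + 1)).sub continuous_const)
      exact (h1.matrix_elem i l)
    exact isOpen_lt hcont continuous_const
  have hcover : Kflat m ⊆ ⋃ j, O j := by
    intro f hf
    obtain ⟨k, hk1, hk2⟩ := exists_small_power (⟨Φ f, hf⟩ : specialUnitaryGroup (Fin m) ℂ) hε
    refine Set.mem_iUnion.mpr ⟨k - 1, ?_⟩
    show N1 ((Φ f) ^ (k - 1 + 1) - 1) < ε
    have hk' : k - 1 + 1 = k := by omega
    rw [hk']
    have : (((⟨Φ f, hf⟩ : specialUnitaryGroup (Fin m) ℂ) ^ k)).1 = (Φ f) ^ k := coe_pow' _ _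
    unfold dd at hk2
    rwa [this] at hk2
  obtain ⟨t, ht⟩ := isCompact_Kflat.elim_finite_subcover O hopen hcover
  refine ⟨t.sup id + 1, by omega, ?_⟩
  intro g
  have hg : ψ g.1 ∈ Kflat m := by
    show Φ (ψ g.1) ∈ SUset m
    rw [Φψ]; exact g.2
  obtain ⟨j, hjt, hj⟩ := Set.mem_iUnion₂.mp (ht hg)
  refine ⟨j + 1, by omega, by
    have := Finset.le_sup (f := id) hjt
    simp only [id] at this
    omega, ?_⟩
  have hj' : N1 ((Φ (ψ g.1)) ^ (j + 1) - 1) < ε := hj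
  rw [Φψ] at hj'
  unfold dd
  rwa [coe_pow']

-- === word evaluation bounds ===

lemma ev_X (g h : specialUnitaryGroup (Fin m) ℂ) : FreeGroup.lift ![g, h] X = g := by
  simp [X]

lemma ev_Y (g h : specialUnitaryGroup (Fin m) ℂ) : FreeGroup.lift ![g, h] Y = h := by
  simp [Y]

lemma dd_sw_succ (g h : specialUnitaryGroup (Fin m) ℂ) (k t : ℕ) :
    dd (FreeGroup.lift ![g, h] (sw k (t + 1))) ≤
      (2 * (m : ℝ) ^ 6) * dd (FreeGroup.lift ![g, h] (sw k t)) ^ 2 := by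
  have h1 : FreeGroup.lift ![g, h] (sw k (t + 1)) =
      ⁅FreeGroup.lift ![g, h] (sw k t),
        (FreeGroup.lift ![g, h] (cnj t)) * (FreeGroup.lift ![g, h] (sw k t)) *
          (FreeGroup.lift ![g, h] (cnj t))⁻¹⁆ := by
    rw [show sw k (t + 1) = ⁅sw k t, cnj t * sw k t * (cnj t)⁻¹⁆ from rfl]
    rw [map_commutatorElement]
    simp [_root_.map_mul, _root_.map_inv]
  rw [h1]
  have h2 := dd_key (FreeGroup.lift ![g, h] (sw k t)) (FreeGroup.lift ![g, h] (sw k t))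
    (FreeGroup.lift ![g, h] (cnj t))
  calc dd ⁅FreeGroup.lift ![g, h] (sw k t),
        (FreeGroup.lift ![g, h] (cnj t)) * (FreeGroup.lift ![g, h] (sw k t)) *
          (FreeGroup.lift ![g, h] (cnj t))⁻¹⁆
      ≤ (2 * (m : ℝ) ^ 6) * dd (FreeGroup.lift ![g, h] (sw k t)) *
          dd (FreeGroup.lift ![g, h] (sw k t)) := h2
    _ = (2 * (m : ℝ) ^ 6) * dd (FreeGroup.lift ![g, h] (sw k t)) ^ 2 := by ring

lemma dd_sw_chain (hm : 1 ≤ m) (g h : specialUnitaryGroup (Fin m) ℂ) (k : ℕ)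
    (hb : dd (FreeGroup.lift ![g, h] (sw k 0)) ≤ 1 / (2 * (2 * (m : ℝ) ^ 6))) (t : ℕ) :
    dd (FreeGroup.lift ![g, h] (sw k t)) ≤ (1 / 2) ^ (2 ^ t) / (2 * (m : ℝ) ^ 6) := by
  have hm' : (1 : ℝ) ≤ (m : ℝ) := by exact_mod_cast hm
  have hp6 : (1 : ℝ) ≤ (m : ℝ) ^ 6 := one_le_pow₀ hm'
  have hK : (1 : ℝ) ≤ 2 * (m : ℝ) ^ 6 := by linarith
  have hKpos : (0 : ℝ) < 2 * (m : ℝ) ^ 6 := by positivity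
  induction t with
  | zero =>
    refine hb.trans (le_of_eq ?_)
    rw [pow_zero, pow_one]
    field_simp
  | succ t ih =>
    refine (dd_sw_succ g h k t).trans ?_
    have h2 : dd (FreeGroup.lift ![g, h] (sw k t)) ^ 2 ≤
        ((1 / 2) ^ (2 ^ t) / (2 * (m : ℝ) ^ 6)) ^ 2 :=
      pow_le_pow_left₀ (dd_nonneg _) ih 2
    calc (2 * (m : ℝ) ^ 6) * dd (FreeGroup.lift ![g, h] (sw k t)) ^ 2
        ≤ (2 * (m : ℝ) ^ 6) * ((1 / 2) ^ (2 ^ t) / (2 * (m : ℝ) ^ 6)) ^ 2 := by gcongr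
      _ = ((1 / 2) ^ (2 ^ t)) ^ 2 / (2 * (m : ℝ) ^ 6) := by field_simp
      _ = (1 / 2) ^ (2 ^ (t + 1)) / (2 * (m : ℝ) ^ 6) := by
          have hexp : 2 ^ (t + 1) = 2 ^ t * 2 := by rw [pow_succ]
          rw [← pow_mul, hexp]

lemma dd_bld_succ (g h : specialUnitaryGroup (Fin m) ℂ) (N T i : ℕ) :
    dd (FreeGroup.lift ![g, h] (bld N T (i + 1))) ≤
      (2 * (m : ℝ) ^ 6) * dd (FreeGroup.lift ![g, h] (sw (N - (i + 1)) T)) *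
        dd (FreeGroup.lift ![g, h] (bld N T i)) := by
  have h1 : FreeGroup.lift ![g, h] (bld N T (i + 1)) =
      ⁅FreeGroup.lift ![g, h] (sw (N - (i + 1)) T),
        h⁻¹ * (FreeGroup.lift ![g, h] (bld N T i)) * h⁻¹⁻¹⁆ := by
    rw [show bld N T (i + 1) = ⁅sw (N - (i + 1)) T, Y⁻¹ * bld N T i * Y⁆ from rfl]
    rw [map_commutatorElement]
    simp only [_root_.map_mul, _root_.map_inv, ev_Y]
    rw [inv_inv]
  rw [h1]
  exact dd_key _ _ _

end ThomAux

open ThomAux in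
theorem thom_words_with_small_image_on_SU (m : ℕ) (hm : 2 ≤ m)
    (U : Set (specialUnitaryGroup (Fin m) ℂ))
    (hU : U ∈ nhds (1 : specialUnitaryGroup (Fin m) ℂ)) :
    ∃ w : FreeGroup (Fin 2), w ≠ 1 ∧
      ∀ g h : specialUnitaryGroup (Fin m) ℂ, wordMap w g h ∈ U := by
  classical
  have hm1 : 1 ≤ m := by omega
  have hm' : (1 : ℝ) ≤ (m : ℝ) := by exact_mod_cast hm1
  have hp6 : (1 : ℝ) ≤ (m : ℝ) ^ 6 := one_le_pow₀ hm'
  have hp2 : (1 : ℝ) ≤ (m : ℝ) ^ 2 := one_le_pow₀ hm'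
  set Kc : ℝ := 2 * (m : ℝ) ^ 6 with hKc
  set Dc : ℝ := 2 * (m : ℝ) ^ 2 with hDc
  set Cc : ℝ := Kc * Dc with hCc
  have hK1 : (1 : ℝ) ≤ Kc := by rw [hKc]; linarith
  have hD1 : (1 : ℝ) ≤ Dc := by rw [hDc]; linarith
  have hC1 : (1 : ℝ) ≤ Cc := by rw [hCc]; nlinarith
  have hKpos : (0 : ℝ) < Kc := by linarith
  have hDpos : (0 : ℝ) < Dc := by linarith
  have hCpos : (0 : ℝ) < Cc := by linarith
  -- extract a quantitative neighborhood
  obtain ⟨V, hV, hVU⟩ := (mem_nhds_induced (Subtype.val) (1 : specialUnitaryGroup (Fin m) ℂ) U).mp hU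
  have hΦV : Φ ⁻¹' V ∈
      nhds (ψ (((1 : specialUnitaryGroup (Fin m) ℂ)) : Matrix (Fin m) (Fin m) ℂ)) := by
    apply continuous_Φ.continuousAt.preimage_mem_nhds
    rw [Φψ]
    exact hV
  obtain ⟨ε, hεpos, hball⟩ := Metric.mem_nhds_iff.mp hΦV
  have hU' : ∀ u : specialUnitaryGroup (Fin m) ℂ, dd u < ε → u ∈ U := by
    intro u hu
    apply hVU
    show u.1 ∈ V
    have h1 : ψ u.1 ∈ Metric.ball (ψ (((1 : specialUnitaryGroup (Fin m) ℂ)) :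
        Matrix (Fin m) (Fin m) ℂ)) ε := by
      rw [Metric.mem_ball]
      have hle : dist (ψ u.1)
          (ψ (((1 : specialUnitaryGroup (Fin m) ℂ)) : Matrix (Fin m) (Fin m) ℂ)) ≤ dd u := by
        refine (dist_pi_le_iff (dd_nonneg u)).mpr fun p => ?_
        have heq : ψ u.1 p - ψ (((1 : specialUnitaryGroup (Fin m) ℂ)) :
            Matrix (Fin m) (Fin m) ℂ) p = (u.1 - 1) p.1 p.2 := by
          simp [ψ, Matrix.sub_apply]
        rw [Complex.dist_eq, heq]
        exact entry_le_N1 _ _ _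
      linarith
    have h2 := hball h1
    have h3 : Φ (ψ u.1) ∈ V := h2
    rwa [Φψ] at h3
  -- uniform power bound
  obtain ⟨N, hN1, hNg⟩ := exists_N (m := m) (ε := 1 / (2 * Kc)) (by positivity)
  obtain ⟨n, hn⟩ := exists_pow_lt_of_lt_one (div_pos hεpos (by positivity : (0:ℝ) < Cc ^ N))
    (by norm_num : (1 / 2 : ℝ) < 1)
  set T := 2 * n + 1 with hT
  have hn2T : n ≤ 2 ^ T := by
    have h1 : n < 2 ^ n := Nat.lt_two_pow_self
    have h2 : 2 ^ n ≤ 2 ^ T := Nat.pow_le_pow_right (by norm_num) (by omega)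
    omega
  refine ⟨bld N T (N - 1), ?_, ?_⟩
  · rw [← mk_bldL]
    exact mk_ne_one (RW_bldL N T (by omega) (N - 1) (by omega))
  · intro g h
    apply hU'
    show dd (FreeGroup.lift ![g, h] (bld N T (N - 1))) < ε
    obtain ⟨k, hk1, hkN, hsmall⟩ := hNg g
    have hbase : dd (FreeGroup.lift ![g, h] (sw k 0)) ≤ 1 / (2 * Kc) := by
      have heq : FreeGroup.lift ![g, h] (sw k 0) = g ^ k := by
        rw [show sw k 0 = X ^ k from rfl, map_pow, ev_X]
      rw [heq]
      exact le_of_lt hsmall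
    -- iteration bound
    have hstep : ∀ i, dd (FreeGroup.lift ![g, h] (bld N T (i + 1))) ≤
        Cc * dd (FreeGroup.lift ![g, h] (bld N T i)) := by
      intro i
      refine (dd_bld_succ g h N T i).trans ?_
      have h1 := dd_le_D hm1 (FreeGroup.lift ![g, h] (sw (N - (i + 1)) T))
      have h2 := dd_nonneg (FreeGroup.lift ![g, h] (bld N T i))
      have h3 := dd_nonneg (FreeGroup.lift ![g, h] (sw (N - (i + 1)) T))
      calc Kc * dd (FreeGroup.lift ![g, h] (sw (N - (i + 1)) T)) *
            dd (FreeGroup.lift ![g, h] (bld N T i))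
          ≤ Kc * Dc * dd (FreeGroup.lift ![g, h] (bld N T i)) := by
            have := mul_le_mul_of_nonneg_right
              (mul_le_mul_of_nonneg_left h1 (le_of_lt hKpos)) h2
            convert this using 2 <;> rw [hDc]
        _ = Cc * dd (FreeGroup.lift ![g, h] (bld N T i)) := by rw [hCc]
    have hiter : ∀ d i0, dd (FreeGroup.lift ![g, h] (bld N T (i0 + d))) ≤
        Cc ^ d * dd (FreeGroup.lift ![g, h] (bld N T i0)) := by
      intro d
      induction d with
      | zero => intro i0; simp
      | succ d ih =>
        intro i0
        have h1 : i0 + (d + 1) = (i0 + d) + 1 := by omega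
        rw [h1]
        refine (hstep (i0 + d)).trans ?_
        have h2 := mul_le_mul_of_nonneg_left (ih i0) (le_of_lt hCpos)
        calc Cc * dd (FreeGroup.lift ![g, h] (bld N T (i0 + d)))
            ≤ Cc * (Cc ^ d * dd (FreeGroup.lift ![g, h] (bld N T i0))) := h2
          _ = Cc ^ (d + 1) * dd (FreeGroup.lift ![g, h] (bld N T i0)) := by ring
    -- there is a level with small value
    have hclaim : ∃ i1, i1 ≤ N - 1 ∧
        dd (FreeGroup.lift ![g, h] (bld N T i1)) ≤ Dc * (1 / 2) ^ (2 ^ T) := by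
      rcases eq_or_lt_of_le hkN with rfl | hklt
      · refine ⟨0, by omega, ?_⟩
        have h0 : dd (FreeGroup.lift ![g, h] (bld k T 0)) ≤ (1 / 2) ^ (2 ^ (T + 1)) / Kc :=
          dd_sw_chain hm1 g h k hbase (T + 1)
        refine h0.trans ?_
        have h1 : ((1:ℝ) / 2) ^ (2 ^ (T + 1)) ≤ (1 / 2) ^ (2 ^ T) :=
          pow_le_pow_of_le_one (by norm_num) (by norm_num)
            (Nat.pow_le_pow_right (by norm_num) (by omega))
        calc ((1:ℝ) / 2) ^ (2 ^ (T + 1)) / Kc ≤ (1 / 2) ^ (2 ^ T) / Kc :=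
              (div_le_div_iff_of_pos_right hKpos).mpr h1
          _ ≤ (1 / 2) ^ (2 ^ T) := div_le_self (by positivity) hK1
          _ ≤ Dc * (1 / 2) ^ (2 ^ T) := le_mul_of_one_le_left (by positivity) hD1
      · refine ⟨(N - k - 1) + 1, by omega, ?_⟩
        have hidx : N - ((N - k - 1) + 1) = k := by omega
        refine (dd_bld_succ g h N T (N - k - 1)).trans ?_
        rw [hidx]
        have h1 : dd (FreeGroup.lift ![g, h] (sw k T)) ≤ (1 / 2) ^ (2 ^ T) / Kc :=
          dd_sw_chain hm1 g h k hbase T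
        have h2 := dd_le_D hm1 (FreeGroup.lift ![g, h] (bld N T (N - k - 1)))
        have h3 := dd_nonneg (FreeGroup.lift ![g, h] (bld N T (N - k - 1)))
        have h4 := dd_nonneg (FreeGroup.lift ![g, h] (sw k T))
        calc Kc * dd (FreeGroup.lift ![g, h] (sw k T)) *
              dd (FreeGroup.lift ![g, h] (bld N T (N - k - 1)))
            ≤ Kc * ((1 / 2) ^ (2 ^ T) / Kc) * Dc := by
              have hb1 := mul_le_mul_of_nonneg_left h1 (le_of_lt hKpos)
              have h2' : dd (FreeGroup.lift ![g, h] (bld N T (N - k - 1))) ≤ Dc :=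
                le_of_le_of_eq h2 hDc.symm
              exact mul_le_mul hb1 h2' h3 (by positivity)
          _ = Dc * (1 / 2) ^ (2 ^ T) := by field_simp
    obtain ⟨i1, hi1, hsmall1⟩ := hclaim
    -- propagate to the top
    have htop : dd (FreeGroup.lift ![g, h] (bld N T (N - 1))) ≤
        Cc ^ (N - 1 - i1) * (Dc * (1 / 2) ^ (2 ^ T)) := by
      have h1 := hiter (N - 1 - i1) i1
      have h2 : i1 + (N - 1 - i1) = N - 1 := by omega
      rw [h2] at h1
      refine h1.trans ?_
      exact mul_le_mul_of_nonneg_left hsmall1 (by positivity)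
    have hfin : Cc ^ (N - 1 - i1) * (Dc * (1 / 2) ^ (2 ^ T)) ≤ Cc ^ N * (1 / 2) ^ n := by
      have h1 : Cc ^ (N - 1 - i1) * Dc ≤ Cc ^ N := by
        have ha : Dc ≤ Cc := by
          rw [hCc]
          exact le_mul_of_one_le_left (le_of_lt hDpos) hK1
        have hb : Cc ^ (N - 1 - i1) * Dc ≤ Cc ^ (N - 1 - i1) * Cc :=
          mul_le_mul_of_nonneg_left ha (by positivity)
        refine hb.trans ?_
        rw [← pow_succ]
        exact pow_le_pow_right₀ hC1 (by omega)
      have h2 : ((1:ℝ) / 2) ^ (2 ^ T) ≤ (1 / 2) ^ n :=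
        pow_le_pow_of_le_one (by norm_num) (by norm_num) hn2T
      calc Cc ^ (N - 1 - i1) * (Dc * (1 / 2) ^ (2 ^ T))
          = (Cc ^ (N - 1 - i1) * Dc) * (1 / 2) ^ (2 ^ T) := by ring
        _ ≤ Cc ^ N * (1 / 2) ^ n := by
            have := mul_le_mul h1 h2 (by positivity) (by positivity)
            exact this
    have hlast : Cc ^ N * ((1:ℝ) / 2) ^ n < ε := by
      rw [mul_comm]
      exact (lt_div_iff₀ (by positivity)).mp hn |>.trans_eq rfl
    calc dd (FreeGroup.lift ![g, h] (bld N T (N - 1)))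
        ≤ Cc ^ (N - 1 - i1) * (Dc * (1 / 2) ^ (2 ^ T)) := htop
      _ ≤ Cc ^ N * (1 / 2) ^ n := hfin
      _ < ε := hlast
end

section
/- Let k be an algebraically closed field of characteristic 0 and let x, y be 2×2 matrices over k with trace zero. Set v₂(x,y) = [[[x,y],x],[[x,y],y]], where [a,b] = ab − ba is the matrix commutator. If the matrix v₂(x,y) is nilpotent, then v₂(x,y) = 0. In particular, the quasi-Engel Lie word v₂ takes no nonzero nilpotent values on sl₂(k) and is not surjective on sl₂(k). -/
set_option maxHeartbeats 1000000


/-- The matrix commutator `[a, b] = a * b - b * a`. -/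
def mbr {k : Type*} [Field k] (a b : Matrix (Fin 2) (Fin 2) k) :
    Matrix (Fin 2) (Fin 2) k :=
  a * b - b * a

/-- The quasi-Engel Lie word `v₂(x,y) = [[[x,y],x],[[x,y],y]]`. -/
def v2 {k : Type*} [Field k] (x y : Matrix (Fin 2) (Fin 2) k) :
    Matrix (Fin 2) (Fin 2) k :=
  mbr (mbr (mbr x y) x) (mbr (mbr x y) y)

lemma mbr_fin_two {k : Type*} [Field k] (a b c d e f g h : k) :
    mbr !![a, b; c, d] !![e, f; g, h] =
      !![b*g - f*c, a*f + b*h - (e*b + f*d); c*e + d*g - (g*a + h*c), c*f - g*b] := by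
  unfold mbr
  rw [Matrix.mul_fin_two, Matrix.mul_fin_two]
  ext i j
  fin_cases i <;> fin_cases j <;>
    simp only [Fin.mk_zero, Fin.mk_one, Matrix.sub_apply, Matrix.cons_val', Matrix.cons_val_zero,
      Matrix.cons_val_one, Matrix.head_cons, Matrix.empty_val', Matrix.cons_val_fin_one,
      Matrix.head_fin_const, Matrix.of_apply] <;> ring

/-- Key identity: for traceless `x, y`, `v₂(x,y) = -2 tr([x,y]²) • [x,y]`. -/
lemma v2_eq_smul {k : Type*} [Field k] (x y : Matrix (Fin 2) (Fin 2) k)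
    (hx : Matrix.trace x = 0) (hy : Matrix.trace y = 0) :
    v2 x y = (-(2 * Matrix.trace (mbr x y * mbr x y))) • (mbr x y) := by
  rw [Matrix.trace_fin_two] at hx hy
  have hx' : x 1 1 = -x 0 0 := by linear_combination hx
  have hy' : y 1 1 = -y 0 0 := by linear_combination hy
  rw [Matrix.eta_fin_two x, Matrix.eta_fin_two y, hx', hy']
  simp only [v2, mbr_fin_two, Matrix.mul_fin_two, Matrix.trace_fin_two_of]
  ext i j
  fin_cases i <;> fin_cases j <;>
    simp only [Fin.mk_zero, Fin.mk_one, Matrix.smul_apply, Matrix.cons_val', Matrix.cons_val_zero,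
      Matrix.cons_val_one, Matrix.head_cons, Matrix.empty_val', Matrix.cons_val_fin_one,
      Matrix.head_fin_const, Matrix.of_apply, smul_eq_mul] <;> ring

theorem v2_eq_zero_of_isNilpotent (k : Type*) [Field k] [IsAlgClosed k] [CharZero k]
    (x y : Matrix (Fin 2) (Fin 2) k)
    (hx : Matrix.trace x = 0) (hy : Matrix.trace y = 0)
    (hnil : IsNilpotent (v2 x y)) :
    v2 x y = 0 := by
  set z := mbr x y with hz
  set t : k := Matrix.trace (z * z) with ht
  have key : v2 x y = (-(2 * t)) • z := v2_eq_smul x y hx hy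
  by_cases h : t = 0
  · rw [key, h]; simp
  · exfalso
    have hc : (-(2 * t)) ≠ 0 := by
      simp only [neg_ne_zero, mul_ne_zero_iff]
      exact ⟨two_ne_zero, h⟩
    have hznil : IsNilpotent z := by
      have : z = (-(2 * t))⁻¹ • ((-(2 * t)) • z) := by
        rw [smul_smul, inv_mul_cancel₀ hc, one_smul]
      rw [this]
      exact (key ▸ hnil).smul _
    have hz2 : IsNilpotent (z * z) := (Commute.refl z).isNilpotent_mul_left hznil
    have : IsNilpotent t := Matrix.isNilpotent_trace_of_isNilpotent hz2
    exact h (this.eq_zero)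
end

section
/- Let k be a field, let K = k((t)) be the field of formal Laurent series over k, and let d ∈ SL(2,K) be the diagonal matrix with entries t and t⁻¹. Then for every integer n ≥ 2 the equation xⁿ = d has no solution x ∈ SL(2,K). In particular, the power word map x ↦ xⁿ is not surjective on SL(2, k((t))) for any n ≥ 2. -/
private lemma sq_fin_two {K : Type*} [Field K] (M : Matrix (Fin 2) (Fin 2) K) :
    M * M = (Matrix.trace M) • M - (M.det) • (1 : Matrix (Fin 2) (Fin 2) K) := by
  ext i j
  fin_cases i <;> fin_cases j <;>
    simp [Matrix.mul_apply, Fin.sum_univ_two, Matrix.trace_fin_two, Matrix.det_fin_two,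
      Matrix.one_apply] <;> ring

private lemma pow_mem_span {K : Type*} [Field K] (M : Matrix (Fin 2) (Fin 2) K)
    (hdet : M.det = 1) (m : ℕ) :
    ∃ a b : K, M ^ m = a • M + b • (1 : Matrix (Fin 2) (Fin 2) K) := by
  induction m with
  | zero => exact ⟨0, 1, by simp⟩
  | succ m ih =>
    obtain ⟨a, b, hab⟩ := ih
    refine ⟨a * Matrix.trace M + b, -a, ?_⟩
    rw [pow_succ, hab]
    have h2 : M * M = (Matrix.trace M) • M - (1 : K) • (1 : Matrix (Fin 2) (Fin 2) K) := by
      rw [sq_fin_two, hdet]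
    rw [add_mul, smul_mul_assoc, smul_mul_assoc, one_mul, h2]
    module

theorem power_map_not_surjective_on_SL2_LaurentSeries
    (k : Type*) [Field k] (n : ℕ) (hn : 2 ≤ n)
    (x : Matrix.SpecialLinearGroup (Fin 2) (LaurentSeries k)) :
    (↑(x ^ n) : Matrix (Fin 2) (Fin 2) (LaurentSeries k)) ≠
      !![(HahnSeries.single (1 : ℤ) (1 : k) : LaurentSeries k), 0;
         0, (HahnSeries.single (1 : ℤ) (1 : k) : LaurentSeries k)⁻¹] := by
  intro h
  set K := LaurentSeries k
  set t : K := HahnSeries.single (1 : ℤ) (1 : k) with ht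
  have htne : t ≠ 0 := HahnSeries.single_ne_zero one_ne_zero
  have htord : t.order = 1 := HahnSeries.order_single one_ne_zero
  set M : Matrix (Fin 2) (Fin 2) K := (x : Matrix (Fin 2) (Fin 2) K) with hM
  have hdet : M.det = 1 := x.2
  rw [Matrix.SpecialLinearGroup.coe_pow] at h
  obtain ⟨a, b, hab⟩ := pow_mem_span M hdet n
  rw [hab] at h
  -- entry equations
  have h01 := congrFun (congrFun h 0) 1
  have h10 := congrFun (congrFun h 1) 0
  have h00 := congrFun (congrFun h 0) 0
  have h11 := congrFun (congrFun h 1) 1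
  simp [Matrix.add_apply, Matrix.smul_apply, Matrix.one_apply, smul_eq_mul] at h01 h10 h00 h11
  by_cases ha : a = 0
  · subst ha
    simp at h00 h11
    -- t = b = t⁻¹
    have heq : t = t⁻¹ := h00.symm.trans h11
    have h2 : t * t = 1 := by
      nth_rewrite 2 [heq]; exact mul_inv_cancel₀ htne
    have := congrArg HahnSeries.order h2
    rw [HahnSeries.order_mul htne htne, htord, HahnSeries.order_one] at this
    norm_num at this
  · have hM01 : M 0 1 = 0 := h01.resolve_left ha
    have hM10 : M 1 0 = 0 := h10.resolve_left ha
    -- M is diagonal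
    have hdiag : M = Matrix.diagonal ![M 0 0, M 1 1] := by
      ext i j
      fin_cases i <;> fin_cases j <;> simp [Matrix.diagonal, hM01, hM10]
    have hMn : (M ^ n) 0 0 = (M 0 0) ^ n := by
      rw [hdiag, Matrix.diagonal_pow]
      simp
    have h00' : (M 0 0) ^ n = t := by
      rw [← hMn, hab]
      simp [Matrix.add_apply, Matrix.smul_apply, Matrix.one_apply, smul_eq_mul, h00]
    have hM00ne : M 0 0 ≠ 0 := by
      intro h0
      rw [h0, zero_pow (by omega)] at h00'
      exact htne h00'.symm
    have := congrArg HahnSeries.order h00'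
    rw [HahnSeries.order_pow, htord] at this
    have hdvd : (n : ℤ) ∣ 1 := ⟨(M 0 0).order, by rw [← this]; simp [mul_comm]⟩
    have := Int.le_of_dvd one_pos hdvd
    omega
end
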